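/- arXiv:0707.0362 — 6 statements merged into one kernel-verified Lean document; each statement's English description precedes it below -/
import Mathlib

section
/- Let G be a group and H, K subgroups with H ∩ K = {1}. Then the multiplication map μ : I(K) ⊗_Z I(H) → I(K)·I(H) ⊆ Z[G], given by (k−1) ⊗ (h−1) ↦ (k−1)(h−1), is an isomorphism of abelian groups. -/
open MonoidAlgebra TensorProduct

/-- The ℤ-submodule of `ℤ[G]` generated by the elements `h - 1`, `h ∈ H`. -/
noncomputable def relAug (G : Type*) [Group G] (H : Subgroup G) :
    Submodule ℤ (MonoidAlgebra ℤ G) :=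
  Submodule.span ℤ {x | ∃ h ∈ H, x = MonoidAlgebra.of ℤ G h - 1}

/-- The multiplication map `μ : I(K) ⊗_ℤ I(H) → ℤ[G]`, `x ⊗ y ↦ x·y`. -/
noncomputable def mulMap (G : Type*) [Group G] (H K : Subgroup G) :
    (↥(relAug G K) ⊗[ℤ] ↥(relAug G H)) →ₗ[ℤ] MonoidAlgebra ℤ G :=
  TensorProduct.lift
    (((LinearMap.mul ℤ (MonoidAlgebra ℤ G)).comp (relAug G K).subtype).compl₂
      (relAug G H).subtype)

/-! Since `H ⊓ K = ⊥`, every element of `K * H` factors uniquely as `k * h`, so there is a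
ℤ-linear map `ℤ[G] → I(K) ⊗ I(H)` sending `k * h ↦ (k - 1) ⊗ (h - 1)` and every other group
element to `0`. It sends `k = k * 1`, `h = 1 * h` and `1 = 1 * 1` to `0`, so expanding
`(k - 1) * (h - 1) = k * h - k - h + 1` shows that it is a left inverse of `μ`. The image is `I(K)·I(H)` because `μ` is
`Submodule.mulMap`. -/

lemma of_sub_one_mem_relAug {G : Type*} [Group G] {H : Subgroup G} {h : G} (hh : h ∈ H) :
    of ℤ G h - 1 ∈ relAug G H :=
  Submodule.subset_span ⟨h, hh, rfl⟩

lemma mulMap_eq_submoduleMulMap (G : Type*) [Group G] (H K : Subgroup G) :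
    mulMap G H K = Submodule.mulMap (relAug G K) (relAug G H) :=
  rfl

section Retraction

variable {G : Type*} [Group G] {H K : Subgroup G}

variable (H K) in
noncomputable def augmentationTmul (p : K × H) : relAug G K ⊗[ℤ] relAug G H :=
  ⟨_, of_sub_one_mem_relAug p.1.2⟩ ⊗ₜ ⟨_, of_sub_one_mem_relAug p.2.2⟩

lemma augmentationTmul_one_right (k : K) : augmentationTmul H K (k, 1) = 0 := by
  simp only [augmentationTmul, OneMemClass.coe_one, map_one, sub_self]
  exact tmul_zero _ _

lemma augmentationTmul_one_left (h : H) : augmentationTmul H K (1, h) = 0 := by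
  simp only [augmentationTmul, OneMemClass.coe_one, map_one, sub_self]
  exact zero_tmul _ _

variable (H K) in
noncomputable def mulMapRetraction : MonoidAlgebra ℤ G →ₗ[ℤ] relAug G K ⊗[ℤ] relAug G H :=
  (MonoidAlgebra.basis G ℤ).constr ℤ
    (Function.extend (fun p : K × H => (p.1 : G) * p.2) (augmentationTmul H K) 0)

lemma mulMapRetraction_of_mul (hKH : Disjoint K H) (k : K) (h : H) :
    mulMapRetraction H K (of ℤ G (k * h)) = augmentationTmul H K (k, h) := by
  rw [mulMapRetraction, of_apply, ← MonoidAlgebra.basis_apply, Module.Basis.constr_basis]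
  exact (Subgroup.mul_injective_of_disjoint hKH).extend_apply _ _ (k, h)

lemma mulMapRetraction_sub_one_mul_sub_one (hKH : Disjoint K H) (k : K) (h : H) :
    mulMapRetraction H K ((of ℤ G k - 1) * (of ℤ G h - 1)) = augmentationTmul H K (k, h) := by
  have expand : (of ℤ G k - 1) * (of ℤ G h - 1) =
      of ℤ G (k * (h : G)) - of ℤ G (k * ((1 : H) : G)) - of ℤ G (((1 : K) : G) * h) +
        of ℤ G (((1 : K) : G) * ((1 : H) : G)) := by
    simp only [map_mul, OneMemClass.coe_one, map_one]
    noncomm_ring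
  simp only [expand, map_add, map_sub, mulMapRetraction_of_mul hKH, augmentationTmul_one_left,
    augmentationTmul_one_right, sub_zero, add_zero]

lemma mulMapRetraction_comp_mulMap (hKH : Disjoint K H) :
    mulMapRetraction H K ∘ₗ mulMap G H K = LinearMap.id := by
  refine TensorProduct.ext (LinearMap.ext_on Submodule.span_span_coe_preimage ?_)
  rintro x ⟨k, hk, hx⟩
  refine LinearMap.ext_on Submodule.span_span_coe_preimage ?_
  rintro y ⟨h, hh, hy⟩
  obtain rfl : x = ⟨_, of_sub_one_mem_relAug hk⟩ := Subtype.ext hx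
  obtain rfl : y = ⟨_, of_sub_one_mem_relAug hh⟩ := Subtype.ext hy
  exact mulMapRetraction_sub_one_mul_sub_one hKH ⟨k, hk⟩ ⟨h, hh⟩

end Retraction

/-- if `H ∩ K = 1`, the multiplication map
`I(K) ⊗_ℤ I(H) → ℤ[G]` is injective with image `I(K)·I(H)`, i.e. it is an isomorphism
of abelian groups onto `I(K)·I(H)`. -/
theorem stmt1 (G : Type*) [Group G] (H K : Subgroup G) (hdisj : H ⊓ K = ⊥) :
    Function.Injective (mulMap G H K) ∧
    LinearMap.range (mulMap G H K) = relAug G K * relAug G H := by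
  have hKH : Disjoint K H := disjoint_iff.mpr (by rwa [inf_comm])
  refine ⟨?_, by rw [mulMap_eq_submoduleMulMap]; exact Submodule.mulMap_range _ _⟩
  exact Function.LeftInverse.injective (g := mulMapRetraction H K)
    (LinearMap.congr_fun (mulMapRetraction_comp_mulMap hKH))
end

section
/- Let G be a group, H and K subgroups with H ∩ K = {1}, and let J be a left ideal of Z[H] contained in I(H), viewed inside Z[G]. Then there is a short exact sequence of abelian groups 0 → I(K)·I(H)·J → I(K)·J → I(K) ⊗_Z (J/I(H)J) → 0, where the right-hand map sends (k−1)x to (k−1) ⊗ (x + I(H)J) for k ∈ K, x ∈ J. -/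
/-!
Multiplication `I(K) ⊗ J → I(K)·J` is injective: `I(K)` and `J` lie in the `ℤ`-spans of `K` and
of `H` in `ℤ[G]`, which are linearly disjoint because `(k, h) ↦ k h` is injective when
`H ∩ K = 1`, and linear disjointness passes to submodules since all torsion-free abelian groups
are flat. Hence `I(K)·J ≅ I(K) ⊗ J`, and tensoring `0 → I(H)J → J → J/I(H)J → 0` with `I(K)`
(right exactness) identifies the kernel of `I(K)·J → I(K) ⊗ J/I(H)J` with `I(K)·I(H)J`.
-/

open MonoidAlgebra TensorProduct

namespace Submodule.LinearDisjoint

variable {R S : Type*} [CommRing R] [Ring S] [Algebra R S] {A B : Submodule R S}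
  (hAB : A.LinearDisjoint B) (C : Submodule R S)

noncomputable def mulTensorQuot : ↥(A * B) →ₗ[R] A ⊗[R] (B ⧸ C.comap B.subtype) :=
  (C.comap B.subtype).mkQ.lTensor A ∘ₗ hAB.mulMap.symm.toLinearMap

theorem mulTensorQuot_surjective : Function.Surjective (hAB.mulTensorQuot C) :=
  (LinearMap.lTensor_surjective _ (mkQ_surjective _)).comp hAB.mulMap.symm.surjective

theorem mulTensorQuot_mul (a : A) (b : B) (hab : a.1 * b.1 ∈ A * B) :
    hAB.mulTensorQuot C ⟨a * b, hab⟩ = a ⊗ₜ[R] Submodule.Quotient.mk b := by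
  have : hAB.mulMap.symm ⟨a * b, hab⟩ = a ⊗ₜ[R] b :=
    hAB.mulMap.symm_apply_eq.2 (Subtype.ext rfl)
  simp [mulTensorQuot, this]

theorem ker_mulTensorQuot (hC : C ≤ B) :
    LinearMap.ker (hAB.mulTensorQuot C) = (A * C).comap (A * B).subtype := by
  set N := C.comap B.subtype
  have hfactor : mulMap A B ∘ₗ N.subtype.lTensor A =
      mulMap A C ∘ₗ (comapSubtypeEquivOfLe hC).toLinearMap.lTensor A :=
    TensorProduct.ext' fun _ _ => rfl
  have hrange : (A * B).subtype ∘ₗ (hAB.mulMap.toLinearMap ∘ₗ N.subtype.lTensor A) =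
      mulMap A B ∘ₗ N.subtype.lTensor A := rfl
  -- Right exactness gives `ker = A ⊗ N`; inside `S`, multiplication sends `A ⊗ N` onto `A * C`.
  rw [mulTensorQuot, LinearMap.ker_comp, lTensor_mkQ, Submodule.comap_equiv_eq_map_symm,
    LinearEquiv.symm_symm, ← LinearMap.range_comp,
    ← Submodule.comap_map_eq_of_injective (A * B).injective_subtype (LinearMap.range _),
    ← LinearMap.range_comp, hrange, hfactor, LinearMap.range_comp_of_range_eq_top,
    mulMap_range]
  exact LinearMap.range_eq_top.2 <|
    LinearMap.lTensor_surjective A (comapSubtypeEquivOfLe hC).surjective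

end Submodule.LinearDisjoint

namespace MonoidAlgebra

variable {R G : Type*} [CommRing R] [Group G]

theorem linearDisjoint_supported {K H : Subgroup G} (hKH : Disjoint K H) :
    (supported R R (K : Set G)).LinearDisjoint (supported R R (H : Set G)) := by
  have hli (L : Subgroup G) : LinearIndependent R fun l : L => single (l : G) (1 : R) :=
    (MonoidAlgebra.basis G R).linearIndependent.comp _ Subtype.val_injective
  simp only [supported_eq_span_single, Set.image_eq_range]
  refine .of_basis_mul _ _ (.span (hli K)) (.span (hli H)) ?_
  simp only [Module.Basis.span_apply, single_mul_single, one_mul]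
  exact (MonoidAlgebra.basis G R).linearIndependent.comp _
    (Subgroup.mul_injective_of_disjoint hKH)

end MonoidAlgebra

section relAug

variable {G : Type*} [Group G]

theorem relAug_le_supported (H : Subgroup G) : relAug G H ≤ supported ℤ ℤ (H : Set G) := by
  rw [relAug, supported_eq_span_single, Submodule.span_le]
  rintro _ ⟨h, hh, rfl⟩
  exact sub_mem (Submodule.subset_span ⟨h, hh, rfl⟩) (Submodule.subset_span ⟨1, H.one_mem, rfl⟩)

theorem relAug_mul_le {H : Subgroup G} {J : Submodule ℤ (MonoidAlgebra ℤ G)}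
    (hJ : ∀ h ∈ H, ∀ x ∈ J, MonoidAlgebra.of ℤ G h * x ∈ J) : relAug G H * J ≤ J := by
  refine Submodule.mul_le.2 fun a ha x hx => ?_
  suffices relAug G H ≤ J.comap (LinearMap.mulRight ℤ x) from this ha
  rw [relAug, Submodule.span_le]
  rintro _ ⟨h, hh, rfl⟩
  simpa [sub_mul] using sub_mem (hJ h hh x hx) hx

end relAug

/-- for `H ∩ K = 1` and `J` a left ideal of `ℤ[H]` contained in `I(H)`
(viewed inside `ℤ[G]`), there is a short exact sequence
`0 → I(K)·I(H)·J → I(K)·J → I(K) ⊗_ℤ (J/I(H)J) → 0`, the right-hand map sending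
`(k−1)x ↦ (k−1) ⊗ (x + I(H)J)`. We state this as: there is a surjective map `s` with
kernel `I(K)I(H)J` satisfying this formula. -/
theorem stmt2 (G : Type*) [Group G] (H K : Subgroup G) (hdisj : H ⊓ K = ⊥)
    (J : Submodule ℤ (MonoidAlgebra ℤ G)) (hJle : J ≤ relAug G H)
    (hJideal : ∀ h ∈ H, ∀ x ∈ J, MonoidAlgebra.of ℤ G h * x ∈ J) :
    ∃ s : ↥(relAug G K * J) →ₗ[ℤ]
        (↥(relAug G K) ⊗[ℤ] (↥J ⧸ (relAug G H * J).comap J.subtype)),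
      Function.Surjective s ∧
      LinearMap.ker s =
        (relAug G K * (relAug G H * J)).comap (relAug G K * J).subtype ∧
      ∀ (k : G) (hk : k ∈ K) (x : MonoidAlgebra ℤ G) (hx : x ∈ J)
        (hmem : (MonoidAlgebra.of ℤ G k - 1) * x ∈ relAug G K * J)
        (hk' : MonoidAlgebra.of ℤ G k - 1 ∈ relAug G K),
        s ⟨(MonoidAlgebra.of ℤ G k - 1) * x, hmem⟩ =
          (⟨MonoidAlgebra.of ℤ G k - 1, hk'⟩ : ↥(relAug G K)) ⊗ₜ[ℤ]
            Submodule.Quotient.mk (⟨x, hx⟩ : ↥J) := by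
  have hAB : (relAug G K).LinearDisjoint J :=
    (linearDisjoint_supported (disjoint_iff.2 hdisj).symm).of_le_of_flat_left
      (relAug_le_supported K) (hJle.trans (relAug_le_supported H))
  refine ⟨hAB.mulTensorQuot (relAug G H * J), hAB.mulTensorQuot_surjective _,
    hAB.ker_mulTensorQuot _ (relAug_mul_le hJideal), ?_⟩
  intro k _ x hx hmem hk'
  exact hAB.mulTensorQuot_mul _ ⟨_, hk'⟩ ⟨x, hx⟩ hmem
end

section
/- Let G = N ⋊ T. Then I(G) = I(T) ⊕ I(N) ⊕ I(T)I(N) as abelian groups. -/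
/-! Every `g ∈ G` factors uniquely as `g = t * n` with `t ∈ T`, `n ∈ N`, and
`g - 1 = (t - 1) + (n - 1) + (t - 1)(n - 1)`, so the three pieces span `I(G)`.
Extending the coordinate maps `g ↦ t` and `g ↦ n` linearly to `ℤ[G]` gives two projections.
The first is right `N`-invariant, so it fixes `I(T)` and kills `I(N)` and `ℤ[G] I(N) ⊇ I(T)I(N)`;
the second is left `T`-invariant, so it fixes `I(N)` and kills `I(T)` and `I(T) ℤ[G] ⊇ I(T)I(N)`.
Such a pair of projections makes the sum direct. -/

open MonoidAlgebra
open scoped Pointwise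

/-- The augmentation ideal `I(G)` of `ℤ[G]`, as a ℤ-submodule. -/
noncomputable def augI (G : Type*) [Group G] : Submodule ℤ (MonoidAlgebra ℤ G) :=
  Submodule.span ℤ {x | ∃ g : G, x = MonoidAlgebra.of ℤ G g - 1}

section Projections

variable {R M : Type*} [Semiring R] [AddCommMonoid M] [Module R M] {P Q S : Submodule R M}

theorem Submodule.disjoint_of_le_eqLocus_of_le_ker {f : M →ₗ[R] M}
    (hP : P ≤ LinearMap.eqLocus f LinearMap.id) (hQ : Q ≤ LinearMap.ker f) : Disjoint P Q := by
  rw [Submodule.disjoint_def]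
  intro x hxP hxQ
  calc x = f x := (hP hxP).symm
    _ = 0 := hQ hxQ

theorem Submodule.inf_sup_eq_bot_of_projections {A B : M →ₗ[R] M}
    (hAP : P ≤ LinearMap.eqLocus A LinearMap.id) (hAQ : Q ≤ LinearMap.ker A)
    (hAS : S ≤ LinearMap.ker A) (hBQ : Q ≤ LinearMap.eqLocus B LinearMap.id)
    (hBP : P ≤ LinearMap.ker B) (hBS : S ≤ LinearMap.ker B) :
    P ⊓ (Q ⊔ S) = ⊥ ∧ Q ⊓ (P ⊔ S) = ⊥ ∧ S ⊓ (P ⊔ Q) = ⊥ := by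
  have hABP : P ≤ LinearMap.eqLocus (A + B) LinearMap.id := fun x hx => by
    change A x + B x = x
    rw [show A x = x from hAP hx, show B x = 0 from hBP hx, add_zero]
  have hABQ : Q ≤ LinearMap.eqLocus (A + B) LinearMap.id := fun x hx => by
    change A x + B x = x
    rw [show A x = 0 from hAQ hx, show B x = x from hBQ hx, zero_add]
  have hABS : S ≤ LinearMap.ker (A + B) := fun x hx => by
    change A x + B x = 0
    rw [show A x = 0 from hAS hx, show B x = 0 from hBS hx, add_zero]
  refine ⟨?_, ?_, ?_⟩ <;> rw [← disjoint_iff]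
  · exact disjoint_of_le_eqLocus_of_le_ker hAP (sup_le hAQ hAS)
  · exact disjoint_of_le_eqLocus_of_le_ker hBQ (sup_le hBP hBS)
  · exact (disjoint_of_le_eqLocus_of_le_ker (sup_le hABP hABQ) hABS).symm

end Projections

namespace MonoidAlgebra

theorem of_mul_sub_one {k G : Type*} [CommRing k] [Monoid G] (g h : G) :
    of k G (g * h) - 1 = (of k G g - 1) + (of k G h - 1) + (of k G g - 1) * (of k G h - 1) := by
  rw [map_mul]; noncomm_ring

variable {k G H : Type*} [CommSemiring k] [Monoid G]

theorem mapDomainLinearMap_of (φ : G → H) (g : G) :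
    mapDomainLinearMap k k φ (of k G g) = single (φ g) 1 :=
  mapDomainLinearMap_single ..

theorem mapDomainLinearMap_mul_of {φ : G → H} {g : G} (hφ : ∀ a, φ (a * g) = φ a) (x : k[G]) :
    mapDomainLinearMap k k φ (x * of k G g) = mapDomainLinearMap k k φ x := by
  induction x using induction_linear with
  | zero => simp
  | add x y hx hy => rw [add_mul, map_add, map_add, hx, hy]
  | single a r => rw [of_apply, single_mul_single, mul_one, mapDomainLinearMap_single,
      mapDomainLinearMap_single, hφ]

theorem mapDomainLinearMap_of_mul {φ : G → H} {g : G} (hφ : ∀ a, φ (g * a) = φ a) (x : k[G]) :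
    mapDomainLinearMap k k φ (of k G g * x) = mapDomainLinearMap k k φ x := by
  induction x using induction_linear with
  | zero => simp
  | add x y hx hy => rw [mul_add, map_add, map_add, hx, hy]
  | single a r => rw [of_apply, single_mul_single, one_mul, mapDomainLinearMap_single,
      mapDomainLinearMap_single, hφ]

end MonoidAlgebra

section RelAug

variable {G : Type*} [Group G]

theorem relAug_le_augI (H : Subgroup G) : relAug G H ≤ augI G :=
  Submodule.span_mono fun _ ⟨h, _, hx⟩ => ⟨h, hx⟩

theorem of_mem_relAug {H : Subgroup G} {h : G} (hh : h ∈ H) : of ℤ G h - 1 ∈ relAug G H :=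
  Submodule.subset_span ⟨h, hh, rfl⟩

theorem relAug_mul_relAug_le {T N : Subgroup G} {S : Submodule ℤ (MonoidAlgebra ℤ G)}
    (hS : ∀ t ∈ T, ∀ n ∈ N, (of ℤ G t - 1) * (of ℤ G n - 1) ∈ S) :
    relAug G T * relAug G N ≤ S := by
  rw [relAug, relAug, Submodule.span_mul_span, Submodule.span_le]
  rintro _ ⟨_, ⟨t, ht, rfl⟩, _, ⟨n, hn, rfl⟩, rfl⟩
  exact hS t ht n hn

theorem relAug_mul_relAug_le_augI (T N : Subgroup G) : relAug G T * relAug G N ≤ augI G :=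
  relAug_mul_relAug_le fun t _ n _ => by
    rw [show (of ℤ G t - 1) * (of ℤ G n - 1)
        = (of ℤ G (t * n) - 1) - (of ℤ G t - 1) - (of ℤ G n - 1) by rw [of_mul_sub_one]; abel]
    exact sub_mem (sub_mem (Submodule.subset_span ⟨_, rfl⟩) (Submodule.subset_span ⟨_, rfl⟩))
      (Submodule.subset_span ⟨_, rfl⟩)

variable {G' : Type*} {H : Subgroup G} {φ : G → G'}

theorem relAug_le_ker_mapDomainLinearMap (hφ : ∀ h ∈ H, φ h = φ 1) :
    relAug G H ≤ LinearMap.ker (mapDomainLinearMap ℤ ℤ φ) := by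
  rw [relAug, Submodule.span_le]
  rintro _ ⟨h, hh, rfl⟩
  rw [SetLike.mem_coe, LinearMap.mem_ker, map_sub, ← map_one (of ℤ G), mapDomainLinearMap_of,
    mapDomainLinearMap_of, hφ h hh, sub_self]

theorem relAug_le_eqLocus_mapDomainLinearMap {φ : G → G} (hφ : ∀ h ∈ H, φ h = h) :
    relAug G H ≤ LinearMap.eqLocus (mapDomainLinearMap ℤ ℤ φ) LinearMap.id := by
  rw [relAug, Submodule.span_le]
  rintro _ ⟨h, hh, rfl⟩
  rw [SetLike.mem_coe, LinearMap.mem_eqLocus, map_sub, ← map_one (of ℤ G), mapDomainLinearMap_of,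
    mapDomainLinearMap_of, hφ h hh, hφ 1 H.one_mem, of_apply, of_apply, LinearMap.id_apply]

theorem relAug_mul_relAug_le_ker_of_right_invariant {T N : Subgroup G}
    (hφ : ∀ g, ∀ n ∈ N, φ (g * n) = φ g) :
    relAug G T * relAug G N ≤ LinearMap.ker (mapDomainLinearMap ℤ ℤ φ) :=
  relAug_mul_relAug_le fun t _ n hn => by
    rw [LinearMap.mem_ker, mul_sub, mul_one, map_sub,
      mapDomainLinearMap_mul_of fun a => hφ a n hn, sub_self]

theorem relAug_mul_relAug_le_ker_of_left_invariant {T N : Subgroup G}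
    (hφ : ∀ t ∈ T, ∀ g, φ (t * g) = φ g) :
    relAug G T * relAug G N ≤ LinearMap.ker (mapDomainLinearMap ℤ ℤ φ) :=
  relAug_mul_relAug_le fun t ht n _ => by
    rw [LinearMap.mem_ker, sub_mul, one_mul, map_sub,
      mapDomainLinearMap_of_mul (hφ t ht), sub_self]

end RelAug

section Complement

variable {G : Type*} [Group G] {T N : Subgroup G}

theorem Subgroup.isComplement'_of_inf_eq_bot_of_sup_eq_top [N.Normal] (hdisj : N ⊓ T = ⊥)
    (hjoin : N ⊔ T = ⊤) : T.IsComplement' N :=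
  isComplement'_of_disjoint_and_mul_eq_univ (disjoint_iff.mpr (inf_comm N T ▸ hdisj))
    (by rw [← Subgroup.mul_normal, sup_comm, hjoin, Subgroup.coe_top])

theorem relAug_sup_relAug_sup_mul_eq_augI (hTN : T.IsComplement' N) :
    relAug G T ⊔ relAug G N ⊔ relAug G T * relAug G N = augI G := by
  refine le_antisymm (sup_le (sup_le (relAug_le_augI T) (relAug_le_augI N))
    (relAug_mul_relAug_le_augI T N)) ?_
  rw [augI, Submodule.span_le]
  rintro _ ⟨g, rfl⟩
  obtain ⟨t, ht, n, hn, rfl⟩ : g ∈ (T : Set G) * (N : Set G) := hTN.mul_eq ▸ Set.mem_univ g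
  rw [SetLike.mem_coe, of_mul_sub_one]
  exact add_mem (add_mem (Submodule.mem_sup_left (Submodule.mem_sup_left (of_mem_relAug ht)))
    (Submodule.mem_sup_left (Submodule.mem_sup_right (of_mem_relAug hn))))
    (Submodule.mem_sup_right (Submodule.mul_mem_mul (of_mem_relAug ht) (of_mem_relAug hn)))

theorem relAug_inf_sup_eq_bot (hTN : T.IsComplement' N) :
    relAug G T ⊓ (relAug G N ⊔ relAug G T * relAug G N) = ⊥ ∧
    relAug G N ⊓ (relAug G T ⊔ relAug G T * relAug G N) = ⊥ ∧
    (relAug G T * relAug G N) ⊓ (relAug G T ⊔ relAug G N) = ⊥ := by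
  let toT : G → G := fun g => (Subgroup.IsComplement.equiv hTN g).1
  let toN : G → G := fun g => (Subgroup.IsComplement.equiv hTN g).2
  have toT_mul : ∀ g, ∀ n ∈ N, toT (g * n) = toT g := fun g n hn => by
    simp only [toT, Subgroup.IsComplement.equiv_mul_right_of_mem hTN hn]
  have toN_mul : ∀ t ∈ T, ∀ g, toN (t * g) = toN g := fun t ht g => by
    simp only [toN, Subgroup.IsComplement.equiv_mul_left_of_mem hTN ht]
  apply Submodule.inf_sup_eq_bot_of_projections (A := mapDomainLinearMap ℤ ℤ toT)
    (B := mapDomainLinearMap ℤ ℤ toN)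
  · exact relAug_le_eqLocus_mapDomainLinearMap fun t ht =>
      congrArg Subtype.val
        (Subgroup.IsComplement.equiv_fst_eq_self_of_mem_of_one_mem hTN N.one_mem ht)
  · exact relAug_le_ker_mapDomainLinearMap fun n hn => by simpa using toT_mul 1 n hn
  · exact relAug_mul_relAug_le_ker_of_right_invariant toT_mul
  · exact relAug_le_eqLocus_mapDomainLinearMap fun n hn =>
      congrArg Subtype.val
        (Subgroup.IsComplement.equiv_snd_eq_self_of_mem_of_one_mem hTN T.one_mem hn)
  · exact relAug_le_ker_mapDomainLinearMap fun t ht => by simpa using toN_mul t ht 1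
  · exact relAug_mul_relAug_le_ker_of_left_invariant toN_mul

end Complement

/-- STATEMENT 3: for `G = N ⋊ T` (internal semidirect product),
`I(G) = I(T) ⊕ I(N) ⊕ I(T)I(N)` as abelian groups: the three additive subgroups sum
to `I(G)` and form an internal direct sum. -/
theorem stmt4 (G : Type*) [Group G] (N T : Subgroup G) [N.Normal]
    (hdisj : N ⊓ T = ⊥) (hjoin : N ⊔ T = ⊤) :
    relAug G T ⊔ relAug G N ⊔ relAug G T * relAug G N = augI G ∧
    relAug G T ⊓ (relAug G N ⊔ relAug G T * relAug G N) = ⊥ ∧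
    relAug G N ⊓ (relAug G T ⊔ relAug G T * relAug G N) = ⊥ ∧
    (relAug G T * relAug G N) ⊓ (relAug G T ⊔ relAug G N) = ⊥ :=
  have hTN := Subgroup.isComplement'_of_inf_eq_bot_of_sup_eq_top hdisj hjoin
  ⟨relAug_sup_relAug_sup_mul_eq_augI hTN, relAug_inf_sup_eq_bot hTN⟩
end

section
/- Let f : 𝔤 → 𝔤' be an injective homomorphism of Lie algebras over a field K. Then the induced map U(f) : U(𝔤) → U(𝔤') of universal enveloping algebras is injective. -/
/-!
Fix a basis `(b_λ)` of `L` indexed by a linearly ordered set. The classical construction lets `L`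
act on the polynomial algebra `K[z_λ]` so that `b_λ` multiplies `z_m` by `z_λ` whenever
`λ ≤ min m`; applied to `1`, the ordered monomials of `U(L)` therefore give distinct monomials, so
they are linearly independent. Straightening shows that they also span `U(L)` (PBW).
Extend a basis of `𝔤` along the injective `f` to a basis of `𝔤'`, with the old indices placed
first in the same order: then `U(f)` sends ordered monomials to ordered monomials, i.e. a basis of
`U(𝔤)` to a linearly independent family, so it is injective.
-/

attribute [local instance] LieRing.ofAssociativeRing

open Finsupp

theorem Multiset.induction_on_cons_of_forall_le {α : Type*} [LinearOrder α]
    {motive : Multiset α → Prop} (m : Multiset α) (zero : motive 0)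
    (cons : ∀ j μ, (∀ a ∈ μ, j ≤ a) → motive μ → motive (j ::ₘ μ)) : motive m := by
  obtain ⟨l, hl, rfl⟩ : ∃ l : List α, l.Pairwise (· ≤ ·) ∧ ↑l = m :=
    ⟨_, m.pairwise_sort _, m.sort_eq _⟩
  induction l with
  | nil => exact zero
  | cons j t ih =>
    rw [List.pairwise_cons] at hl
    exact cons j t (fun a ha => hl.1 a (by exact_mod_cast ha)) (ih hl.2)

theorem Multiset.forall_mem_cons_of_le_of_forall_le {α : Type*} [Preorder α] {i j : α}
    {μ : Multiset α} (hij : i ≤ j) (hμ : ∀ a ∈ μ, j ≤ a) : ∀ a ∈ j ::ₘ μ, i ≤ a :=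
  Multiset.forall_mem_cons.2 ⟨hij, fun a ha => hij.trans (hμ a ha)⟩

theorem Finsupp.linearCombination_congr {α R M : Type*} [Semiring R] [AddCommMonoid M]
    [Module R M] {v w : α → M} {l : α →₀ R} (h : ∀ a ∈ l.support, v a = w a) :
    linearCombination R v l = linearCombination R w l := by
  simp only [linearCombination_apply]
  exact Finsupp.sum_congr fun a ha => by rw [h a ha]

theorem Finsupp.linearCombination_mem {α R M : Type*} [Semiring R] [AddCommMonoid M] [Module R M]
    {v : α → M} {l : α →₀ R} {S : Submodule R M} (h : ∀ a ∈ l.support, v a ∈ S) :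
    linearCombination R v l ∈ S := by
  rw [linearCombination_apply]
  exact Submodule.finsuppSum_mem _ _ _ _ fun a ha => S.smul_mem _ (h a (mem_support_iff.2 ha))

theorem Module.Basis.apply_mem_of_forall {ι R M N : Type*} [Semiring R] [AddCommMonoid M]
    [Module R M] [AddCommMonoid N] [Module R N] (b : Basis ι R M) {g : M →ₗ[R] N}
    {S : Submodule R N} (h : ∀ i, g (b i) ∈ S) (x : M) : g x ∈ S :=
  (Submodule.span_le (p := S.comap g)).2 (Set.range_subset_iff.2 h) (b.mem_span x)

theorem Module.Basis.injective_of_linearIndependent_comp {ι R M N : Type*} [CommSemiring R]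
    [AddCommMonoid M] [Module R M] [AddCommMonoid N] [Module R N] (b : Basis ι R M)
    {g : M →ₗ[R] N} (h : LinearIndependent R (g ∘ b)) : Function.Injective g := by
  have := b.injective_constr_of_linearIndependent (R₂ := R) h
  rwa [show ⇑g ∘ ⇑b = fun i => g (b i) from rfl, b.constr_self] at this

theorem Module.Basis.sumExtend_apply_inl {K V ι : Type*} [DivisionRing K] [AddCommGroup V]
    [Module K V] {v : ι → V} (hs : LinearIndependent K v) (i : ι) :
    Basis.sumExtend hs (Sum.inl i) = v i := by
  simp [Basis.sumExtend]
  rfl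

section BracketDefect

variable {R L M : Type*} [CommRing R] [LieRing L] [LieAlgebra R L] [AddCommGroup M] [Module R M]

def bracketDefect (ρ : L →ₗ[R] Module.End R M) : L →ₗ[R] L →ₗ[R] Module.End R M :=
  LinearMap.mk₂ R (fun x y => ρ x * ρ y - ρ y * ρ x - ρ ⁅x, y⁆)
    (by intro x x' y; simp only [map_add, add_mul, mul_add, add_lie]; abel)
    (by intro c x y; simp only [map_smul, smul_mul_assoc, mul_smul_comm, smul_lie, smul_sub])
    (by intro x y y'; simp only [map_add, add_mul, mul_add, lie_add]; abel)
    (by intro c x y; simp only [map_smul, smul_mul_assoc, mul_smul_comm, lie_smul, smul_sub])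

variable {ρ : L →ₗ[R] Module.End R M}

theorem bracketDefect_apply_eq_zero_iff {x y : L} {p : M} :
    bracketDefect ρ x y p = 0 ↔ ρ x (ρ y p) = ρ y (ρ x p) + ρ ⁅x, y⁆ p := by
  simp [bracketDefect, sub_sub, sub_eq_zero]

theorem bracketDefect_swap (x y : L) : bracketDefect ρ y x = -bracketDefect ρ x y := by
  simp only [bracketDefect, LinearMap.mk₂_apply, ← lie_skew x y, map_neg]
  abel

theorem bracketDefect_apply_eq_zero_of_basis {ι : Type*} [LinearOrder ι] (b : Module.Basis ι R L)
    {p : M} (h : ∀ i j, j ≤ i → bracketDefect ρ (b i) (b j) p = 0) (x y : L) :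
    bracketDefect ρ x y p = 0 := by
  have : (bracketDefect ρ).compr₂ (LinearMap.applyₗ p) = 0 :=
    b.ext fun i => b.ext fun j => by
      rcases le_total j i with hji | hij
      · exact h i j hji
      · simp [bracketDefect_swap (b j) (b i), h j i hij]
  exact congr($this x y)

def lieHomOfBracketDefectEqZero (ρ : L →ₗ[R] Module.End R M)
    (h : ∀ x y, bracketDefect ρ x y = 0) : L →ₗ⁅R⁆ Module.End R M :=
  { ρ with
    map_lie' := fun {x y} => by
      have := h x y
      simp only [bracketDefect, LinearMap.mk₂_apply, sub_eq_zero] at this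
      simp [LieRing.of_associative_ring_bracket, ← this] }

end BracketDefect

namespace UniversalEnvelopingAlgebra

variable {R L : Type*} [CommRing R] [LieRing L] [LieAlgebra R L]

@[elab_as_elim]
theorem induction {motive : UniversalEnvelopingAlgebra R L → Prop}
    (algebraMap : ∀ c : R, motive (algebraMap R _ c)) (ι : ∀ x : L, motive (ι R x))
    (mul : ∀ a b, motive a → motive b → motive (a * b))
    (add : ∀ a b, motive a → motive b → motive (a + b)) (u : UniversalEnvelopingAlgebra R L) :
    motive u := by
  obtain ⟨a, rfl⟩ := RingCon.mkₐ_surjective (α := R) (ringCon R L) u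
  change motive (mkAlgHom R L a)
  induction a using TensorAlgebra.induction with
  | algebraMap c => rw [AlgHom.commutes]; exact algebraMap c
  | ι x => exact ι x
  | mul a b ha hb => rw [map_mul]; exact mul _ _ ha hb
  | add a b ha hb => rw [map_add]; exact add _ _ ha hb

theorem ι_mul_ι (x y : L) : ι R x * ι R y = ι R y * ι R x + ι R ⁅x, y⁆ := by
  rw [LieHom.map_lie, LieRing.of_associative_ring_bracket]
  abel

theorem eq_top_of_one_mem_of_ι_mul_mem (S : Submodule R (UniversalEnvelopingAlgebra R L))
    (h1 : 1 ∈ S) (hι : ∀ x, ∀ s ∈ S, ι R x * s ∈ S) : S = ⊤ := by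
  refine Submodule.eq_top_iff'.2 fun u => ?_
  suffices h : ∀ s ∈ S, u * s ∈ S by simpa using h 1 h1
  induction u using UniversalEnvelopingAlgebra.induction with
  | algebraMap c => intro s hs; rw [← Algebra.smul_def]; exact S.smul_mem c hs
  | ι x => exact hι x
  | mul a a' ha ha' => intro s hs; rw [mul_assoc]; exact ha _ (ha' s hs)
  | add a a' ha ha' => intro s hs; rw [add_mul]; exact add_mem (ha s hs) (ha' s hs)

end UniversalEnvelopingAlgebra

open UniversalEnvelopingAlgebra

namespace PBW

variable {K L Λ : Type*} [CommRing K] [LieRing L] [LieAlgebra K L]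

variable (K) in
/-- `Multiset Λ →₀ K` is the polynomial ring `K[z_λ]`, `single m 1` being the monomial `z_m`. -/
def degreeLE (n : ℕ) : Submodule K (Multiset Λ →₀ K) :=
  supported K K {m | Multiset.card m ≤ n}

theorem single_mem_degreeLE {m : Multiset Λ} {n : ℕ} (h : Multiset.card m ≤ n) :
    single m (1 : K) ∈ degreeLE K n :=
  single_mem_supported K 1 h

theorem degreeLE_mono : Monotone (degreeLE K (Λ := Λ)) :=
  fun _ _ h => supported_mono fun _ hm => le_trans hm h

theorem card_le_of_mem_degreeLE {p : Multiset Λ →₀ K} {n : ℕ} (hp : p ∈ degreeLE K n)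
    {m : Multiset Λ} (hm : m ∈ p.support) : Multiset.card m ≤ n :=
  (mem_supported K p).1 hp hm

theorem forall_mem_degreeLE {N : Type*} [AddCommGroup N] [Module K N]
    {g : (Multiset Λ →₀ K) →ₗ[K] N} {n : ℕ}
    (h : ∀ m : Multiset Λ, Multiset.card m ≤ n → g (single m 1) = 0) :
    ∀ p ∈ degreeLE K n, g p = 0 := by
  suffices degreeLE K n ≤ LinearMap.ker g from fun p hp => this hp
  rw [degreeLE, supported_eq_span_single, Submodule.span_le]
  rintro _ ⟨m, hm, rfl⟩
  exact h m hm

variable [LinearOrder Λ] (b : Module.Basis Λ K L)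

/-- `approx b d i m` is the action of `b_i` on `z_m`, computed with recursion depth `d`.
For `m = j ::ₘ t` with `j = min m < i` the recursion is the straightening
`b_i · z_j z_t = b_j · (b_i · z_t) + [b_i, b_j] · z_t`, where `b_i · z_t - z_i z_t` has lower
degree. The value no longer depends on `d` once `card m ≤ d`. -/
noncomputable def approx : ℕ → Λ → Multiset Λ → Multiset Λ →₀ K
  | 0, i, m => single (i ::ₘ m) 1
  | d + 1, i, m =>
    match m.sort (· ≤ ·) with
    | j :: t =>
      if j < i then
        single (i ::ₘ m) 1
          + linearCombination K (approx d j) (approx d i t - single (i ::ₘ t) 1)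
          + linearCombination K (fun k => approx d k t) (b.repr ⁅b i, b j⁆)
      else single (i ::ₘ m) 1
    | [] => single (i ::ₘ m) 1

theorem approx_of_forall_le {i : Λ} {m : Multiset Λ} (h : ∀ a ∈ m, i ≤ a) (d : ℕ) :
    approx b d i m = single (i ::ₘ m) 1 := by
  cases d with
  | zero => rfl
  | succ d =>
    induction m using Multiset.induction_on_cons_of_forall_le with
    | zero => simp [approx]
    | cons j μ hμ _ =>
      rw [approx, Multiset.sort_cons _ _ _ hμ]
      simp [not_lt.2 (h j (Multiset.mem_cons_self j μ))]

theorem approx_succ_cons_of_lt {i j : Λ} {μ : Multiset Λ} (hμ : ∀ a ∈ μ, j ≤ a) (hji : j < i)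
    (d : ℕ) :
    approx b (d + 1) i (j ::ₘ μ) = single (i ::ₘ j ::ₘ μ) 1
      + linearCombination K (approx b d j) (approx b d i μ - single (i ::ₘ μ) 1)
      + linearCombination K (fun k => approx b d k μ) (b.repr ⁅b i, b j⁆) := by
  rw [approx, Multiset.sort_cons _ _ _ hμ]
  simp only [Multiset.sort_eq, if_pos hji]

theorem approx_sub_single_mem (d : ℕ) :
    ∀ (i : Λ) (m : Multiset Λ), Multiset.card m ≤ d →
      approx b d i m - single (i ::ₘ m) 1 ∈ degreeLE K (Multiset.card m) := by
  induction d with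
  | zero => intro i m _; simp [approx]
  | succ d ih =>
    intro i m hm
    induction m using Multiset.induction_on_cons_of_forall_le with
    | zero => simp [approx_of_forall_le]
    | cons j μ hμ _ =>
      rw [Multiset.card_cons] at hm ⊢
      have hμd : Multiset.card μ ≤ d := by omega
      have happrox : ∀ k ν, Multiset.card ν ≤ Multiset.card μ →
          approx b d k ν ∈ degreeLE K (Multiset.card μ + 1) := fun k ν hν => by
        rw [← sub_add_cancel (approx b d k ν) (single (k ::ₘ ν) 1)]
        exact add_mem (degreeLE_mono (by omega) (ih k ν (hν.trans hμd)))
          (single_mem_degreeLE (by simpa using hν))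
      rcases le_or_gt i j with hij | hji
      · rw [approx_of_forall_le b (Multiset.forall_mem_cons_of_le_of_forall_le hij hμ), sub_self]
        exact zero_mem _
      · rw [approx_succ_cons_of_lt b hμ hji, add_assoc, add_sub_cancel_left]
        exact add_mem
          (linearCombination_mem fun ν hν =>
            happrox j ν (card_le_of_mem_degreeLE (ih i μ hμd) hν))
          (linearCombination_mem fun k _ => happrox k μ le_rfl)

theorem approx_succ (d : ℕ) :
    ∀ (i : Λ) (m : Multiset Λ), Multiset.card m ≤ d → approx b (d + 1) i m = approx b d i m := by
  induction d with
  | zero =>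
    intro i m hm
    obtain rfl := Multiset.card_eq_zero.1 (Nat.le_zero.1 hm)
    simp [approx_of_forall_le]
  | succ d ih =>
    intro i m hm
    induction m using Multiset.induction_on_cons_of_forall_le with
    | zero => simp [approx_of_forall_le]
    | cons j μ hμ _ =>
      rw [Multiset.card_cons] at hm
      have hμd : Multiset.card μ ≤ d := by omega
      rcases le_or_gt i j with hij | hji
      · have hi := Multiset.forall_mem_cons_of_le_of_forall_le hij hμ
        rw [approx_of_forall_le b hi, approx_of_forall_le b hi]
      · rw [approx_succ_cons_of_lt b hμ hji, approx_succ_cons_of_lt b hμ hji, ih i μ hμd]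
        congr 2
        · exact linearCombination_congr fun ν hν =>
            ih j ν ((card_le_of_mem_degreeLE (approx_sub_single_mem b d i μ hμd) hν).trans hμd)
        · exact congr_arg _ (funext fun k => ih k μ hμd)

theorem approx_of_card_le {d : ℕ} {m : Multiset Λ} (h : Multiset.card m ≤ d) (i : Λ) :
    approx b d i m = approx b (Multiset.card m) i m := by
  induction d, h using Nat.le_induction with
  | base => rfl
  | succ d hd ih => rw [approx_succ b d i m hd, ih]

noncomputable def rep (i : Λ) : Module.End K (Multiset Λ →₀ K) :=
  linearCombination K fun m => approx b (Multiset.card m) i m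

theorem rep_single (i : Λ) (m : Multiset Λ) :
    rep b i (single m 1) = approx b (Multiset.card m) i m := by
  simp [rep]

theorem rep_single_of_forall_le {i : Λ} {m : Multiset Λ} (h : ∀ a ∈ m, i ≤ a) :
    rep b i (single m 1) = single (i ::ₘ m) 1 := by
  rw [rep_single, approx_of_forall_le b h]

theorem rep_single_sub_single_mem (i : Λ) (m : Multiset Λ) :
    rep b i (single m 1) - single (i ::ₘ m) 1 ∈ degreeLE K (Multiset.card m) := by
  rw [rep_single]
  exact approx_sub_single_mem b _ i m le_rfl

theorem rep_apply_of_mem_degreeLE {n : ℕ} {p : Multiset Λ →₀ K} (hp : p ∈ degreeLE K n)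
    (i : Λ) : rep b i p = linearCombination K (approx b n i) p :=
  linearCombination_congr fun _ hm => (approx_of_card_le b (card_le_of_mem_degreeLE hp hm) i).symm

noncomputable def repL : L →ₗ[K] Module.End K (Multiset Λ →₀ K) :=
  linearCombination K (rep b) ∘ₗ b.repr.toLinearMap

theorem repL_basis (i : Λ) : repL b (b i) = rep b i := by
  simp [repL]

theorem repL_apply (x : L) (p : Multiset Λ →₀ K) :
    repL b x p = linearCombination K (fun k => rep b k p) (b.repr x) := by
  simp [repL, linearCombination_apply, Finsupp.sum, LinearMap.sum_apply]

theorem rep_single_cons_of_lt {i j : Λ} {μ : Multiset Λ} (hμ : ∀ a ∈ μ, j ≤ a) (hji : j < i) :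
    rep b i (single (j ::ₘ μ) 1) = single (i ::ₘ j ::ₘ μ) 1
      + rep b j (rep b i (single μ 1) - single (i ::ₘ μ) 1)
      + repL b ⁅b i, b j⁆ (single μ 1) := by
  rw [rep_single, Multiset.card_cons, approx_succ_cons_of_lt b hμ hji, repL_apply,
    rep_apply_of_mem_degreeLE b (rep_single_sub_single_mem b i μ)]
  simp only [rep_single]

theorem bracketDefect_repL_single_of_forall_le {i j : Λ} (hji : j ≤ i) {μ : Multiset Λ}
    (hμ : ∀ a ∈ μ, j ≤ a) : bracketDefect (repL b) (b i) (b j) (single μ 1) = 0 := by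
  rw [bracketDefect_apply_eq_zero_iff, repL_basis, repL_basis]
  rcases hji.eq_or_lt with rfl | hlt
  · simp
  rw [rep_single_of_forall_le b hμ, rep_single_cons_of_lt b hμ hlt, map_sub,
    rep_single_of_forall_le b (Multiset.forall_mem_cons.2 ⟨hji, hμ⟩), Multiset.cons_swap]
  abel

/-- For `z_m = z_k z_μ` with `k < j ≤ i`, move `ρ_k` to the front of both `ρ_i ρ_j z_m` and
`ρ_j ρ_i z_m` using the statement in lower degree; the Jacobi identity closes the computation. -/
theorem bracketDefect_repL_single_cons_of_lt {i j k : Λ} {μ : Multiset Λ}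
    (hμ : ∀ a ∈ μ, k ≤ a) (hkj : k < j) (hji : j ≤ i)
    (ih : ∀ p ∈ degreeLE K (Multiset.card μ), ∀ x y, bracketDefect (repL b) x y p = 0) :
    bracketDefect (repL b) (b i) (b j) (single (k ::ₘ μ) 1) = 0 := by
  set ρ := repL b
  set z := (single μ 1 : Multiset Λ →₀ K)
  have hz : z ∈ degreeLE K (Multiset.card μ) := single_mem_degreeLE le_rfl
  have expand : ∀ i' j', k ≤ i' → k ≤ j' →
      ρ (b i') (ρ (b j') (ρ (b k) z)) = ρ (b k) (ρ (b i') (ρ (b j') z))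
        + ρ ⁅b i', b k⁆ (ρ (b j') z) + ρ ⁅b j', b k⁆ (ρ (b i') z) + ρ ⁅b i', ⁅b j', b k⁆⁆ z := by
    intro i' j' hki' hkj'
    have h1 := bracketDefect_repL_single_of_forall_le b hkj' hμ
    have h2 : bracketDefect ρ (b i') (b k) (ρ (b j') z) = 0 := by
      rw [← add_sub_cancel (single (j' ::ₘ μ) 1) (ρ (b j') z), map_add,
        bracketDefect_repL_single_of_forall_le b hki' (Multiset.forall_mem_cons.2 ⟨hkj', hμ⟩),
        ih _ (by rw [repL_basis]; exact rep_single_sub_single_mem b j' μ), add_zero]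
    have h3 := ih z hz (b i') ⁅b j', b k⁆
    rw [bracketDefect_apply_eq_zero_iff] at h1 h2 h3
    rw [h1, map_add, h2, h3]
    abel
  have h4 := ih z hz ⁅b i, b j⁆ (b k)
  have h5 := ih z hz (b i) (b j)
  rw [bracketDefect_apply_eq_zero_iff] at h4 h5 ⊢
  have hX : single (k ::ₘ μ) 1 = ρ (b k) z := by rw [repL_basis, rep_single_of_forall_le b hμ]
  rw [hX, expand i j (hkj.le.trans hji) hkj.le, expand j i hkj.le (hkj.le.trans hji), h4, h5,
    lie_lie, map_sub, LinearMap.sub_apply, map_add]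
  abel

theorem bracketDefect_repL_eq_zero (x y : L) : bracketDefect (repL b) x y = 0 := by
  suffices h : ∀ n (m : Multiset Λ), Multiset.card m = n →
      ∀ x y, bracketDefect (repL b) x y (single m 1) = 0 by
    ext m : 2
    exact h _ m rfl x y
  intro n
  induction n using Nat.strong_induction_on with
  | _ n ih =>
  intro m hm
  refine bracketDefect_apply_eq_zero_of_basis b fun i j hji => ?_
  induction m using Multiset.induction_on_cons_of_forall_le with
  | zero => exact bracketDefect_repL_single_of_forall_le b hji (by simp)
  | cons k μ hμ _ =>
    by_cases hjk : j ≤ k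
    · exact bracketDefect_repL_single_of_forall_le b hji
        (Multiset.forall_mem_cons_of_le_of_forall_le hjk hμ)
    · refine bracketDefect_repL_single_cons_of_lt b hμ (not_le.1 hjk) hji fun p hp x y => ?_
      refine forall_mem_degreeLE (g := bracketDefect (repL b) x y) (fun ν hν => ?_) p hp
      exact ih _ (by rw [← hm, Multiset.card_cons]; omega) ν rfl x y

noncomputable def pbwRep : L →ₗ⁅K⁆ Module.End K (Multiset Λ →₀ K) :=
  lieHomOfBracketDefectEqZero (repL b) (bracketDefect_repL_eq_zero b)

theorem pbwRep_basis (i : Λ) : pbwRep b (b i) = rep b i :=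
  repL_basis b i

noncomputable def orderedMonomial (m : Multiset Λ) : UniversalEnvelopingAlgebra K L :=
  ((m.sort (· ≤ ·)).map fun i => ι K (b i)).prod

theorem orderedMonomial_zero : orderedMonomial b 0 = 1 := by
  simp [orderedMonomial]

theorem orderedMonomial_cons {i : Λ} {m : Multiset Λ} (h : ∀ a ∈ m, i ≤ a) :
    orderedMonomial b (i ::ₘ m) = ι K (b i) * orderedMonomial b m := by
  simp [orderedMonomial, Multiset.sort_cons _ _ _ h]

theorem lift_pbwRep_orderedMonomial (m : Multiset Λ) :
    lift K (pbwRep b) (orderedMonomial b m) (single 0 1) = single m 1 := by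
  induction m using Multiset.induction_on_cons_of_forall_le with
  | zero => simp [orderedMonomial_zero]
  | cons j μ hμ ih =>
    rw [orderedMonomial_cons b hμ, map_mul, Module.End.mul_apply, ih, lift_ι_apply, pbwRep_basis,
      rep_single_of_forall_le b hμ]

theorem linearIndependent_orderedMonomial : LinearIndependent K (orderedMonomial b) :=
  .of_comp (LinearMap.applyₗ (single 0 1) ∘ₗ (lift K (pbwRep b)).toLinearMap) <| by
    convert linearIndependent_single_one K (Multiset Λ) with m
    exact lift_pbwRep_orderedMonomial b m

theorem lift_comp_orderedMonomial {L' Λ' : Type*} [LieRing L'] [LieAlgebra K L'] [LinearOrder Λ']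
    {b' : Module.Basis Λ' K L'} (f : L →ₗ⁅K⁆ L') {e : Λ → Λ'} (he : StrictMono e)
    (hb : ∀ i, b' (e i) = f (b i)) (m : Multiset Λ) :
    lift K ((ι K).comp f) (orderedMonomial b m) = orderedMonomial b' (m.map e) := by
  rw [orderedMonomial, orderedMonomial, ← Multiset.map_sort e m (· ≤ ·) (· ≤ ·)
    (fun a _ a' _ => he.le_iff_le.symm), map_list_prod, List.map_map, List.map_map]
  congr 1
  exact List.map_congr_left fun i _ => by simp [hb]

noncomputable def orderedMonomialSpan (n : ℕ) : Submodule K (UniversalEnvelopingAlgebra K L) :=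
  Submodule.span K (orderedMonomial b '' {m | Multiset.card m ≤ n})

theorem orderedMonomialSpan_mono : Monotone (orderedMonomialSpan b) :=
  fun _ _ h => Submodule.span_mono (Set.image_mono fun _ hm => le_trans hm h)

theorem orderedMonomial_mem_orderedMonomialSpan {m : Multiset Λ} {n : ℕ}
    (h : Multiset.card m ≤ n) : orderedMonomial b m ∈ orderedMonomialSpan b n :=
  Submodule.subset_span ⟨m, h, rfl⟩

theorem orderedMonomialSpan_le_comap_of_basis {n : ℕ}
    (h : ∀ i, orderedMonomialSpan b n ≤
      (orderedMonomialSpan b (n + 1)).comap (LinearMap.mulLeft K (ι K (b i)))) (x : L) :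
    orderedMonomialSpan b n ≤
      (orderedMonomialSpan b (n + 1)).comap (LinearMap.mulLeft K (ι K x)) :=
  fun s hs => b.apply_mem_of_forall (S := orderedMonomialSpan b (n + 1))
    (g := LinearMap.mulRight K s ∘ₗ (ι K).toLinearMap) (fun i => h i hs) x

variable [WellFoundedLT Λ]

theorem orderedMonomialSpan_le_comap (n : ℕ) (x : L) :
    orderedMonomialSpan b n ≤
      (orderedMonomialSpan b (n + 1)).comap (LinearMap.mulLeft K (ι K x)) := by
  refine orderedMonomialSpan_le_comap_of_basis b (fun i => ?_) x
  induction n generalizing i with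
  | zero =>
    rw [orderedMonomialSpan, Submodule.span_le]
    rintro _ ⟨m, hm, rfl⟩
    obtain rfl := Multiset.card_eq_zero.1 (Nat.le_zero.1 hm)
    rw [SetLike.mem_coe, Submodule.mem_comap, LinearMap.mulLeft_apply,
      ← orderedMonomial_cons b (m := 0) (by simp)]
    exact orderedMonomial_mem_orderedMonomialSpan b (by simp)
  | succ n ih =>
    induction i using WellFoundedLT.induction with
    | _ i ihi =>
    rw [orderedMonomialSpan, Submodule.span_le]
    rintro _ ⟨m, hm, rfl⟩
    rw [SetLike.mem_coe, Submodule.mem_comap, LinearMap.mulLeft_apply]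
    induction m using Multiset.induction_on_cons_of_forall_le with
    | zero =>
      rw [← orderedMonomial_cons b (m := 0) (by simp)]
      exact orderedMonomial_mem_orderedMonomialSpan b (by simp)
    | cons j μ hμ _ =>
      rw [Set.mem_ofPred_eq, Multiset.card_cons] at hm
      by_cases hij : i ≤ j
      · rw [← orderedMonomial_cons b (Multiset.forall_mem_cons_of_le_of_forall_le hij hμ)]
        exact orderedMonomial_mem_orderedMonomialSpan b (by simp; omega)
      · have hμn := orderedMonomial_mem_orderedMonomialSpan b (Nat.le_of_succ_le_succ hm)
        rw [orderedMonomial_cons b hμ, ← mul_assoc, ι_mul_ι, add_mul, mul_assoc]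
        exact add_mem (ihi j (not_le.1 hij) (ih i hμn))
          (orderedMonomialSpan_mono b (n + 1).le_succ
            (orderedMonomialSpan_le_comap_of_basis b ih _ hμn))

theorem span_orderedMonomial : Submodule.span K (Set.range (orderedMonomial b)) = ⊤ := by
  refine eq_top_of_one_mem_of_ι_mul_mem _
    (orderedMonomial_zero b ▸ Submodule.subset_span ⟨0, rfl⟩) fun x => ?_
  suffices h : Submodule.span K (Set.range (orderedMonomial b)) ≤
      (Submodule.span K (Set.range (orderedMonomial b))).comap (LinearMap.mulLeft K (ι K x)) from
    fun s hs => h hs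
  refine Submodule.span_le.2 (Set.range_subset_iff.2 fun m => ?_)
  exact Submodule.span_mono (Set.image_subset_range _ _)
    (orderedMonomialSpan_le_comap b _ x (orderedMonomial_mem_orderedMonomialSpan b le_rfl))

noncomputable def pbwBasis : Module.Basis (Multiset Λ) K (UniversalEnvelopingAlgebra K L) :=
  .mk (linearIndependent_orderedMonomial b) (span_orderedMonomial b).ge

theorem pbwBasis_apply (m : Multiset Λ) : pbwBasis b m = orderedMonomial b m :=
  Module.Basis.mk_apply _ _ _

end PBW

/-- if `f : 𝔤 → 𝔤'` is an injective homomorphism of Lie algebras over a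
field `K`, then the induced map `U(f) : U(𝔤) → U(𝔤')` of universal enveloping algebras
is injective. -/
theorem stmt13 {K 𝔤 𝔤' : Type*} [Field K]
    [LieRing 𝔤] [LieAlgebra K 𝔤] [LieRing 𝔤'] [LieAlgebra K 𝔤']
    (f : 𝔤 →ₗ⁅K⁆ 𝔤') (hf : Function.Injective f) :
    Function.Injective
      (UniversalEnvelopingAlgebra.lift K
        ((UniversalEnvelopingAlgebra.ι K).comp f :
          𝔤 →ₗ⁅K⁆ UniversalEnvelopingAlgebra K 𝔤')) := by
  let bG := Module.Basis.ofVectorSpace K 𝔤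
  let _ : LinearOrder (Module.Basis.ofVectorSpaceIndex K 𝔤) :=
    IsWellOrder.linearOrder WellOrderingRel
  have : WellFoundedLT (Module.Basis.ofVectorSpaceIndex K 𝔤) := ⟨WellOrderingRel.isWellOrder.wf⟩
  have hli : LinearIndependent K (f ∘ bG) :=
    bG.linearIndependent.map' f.toLinearMap (LinearMap.ker_eq_bot.2 hf)
  let _ : LinearOrder (Module.Basis.sumExtendIndex hli) := IsWellOrder.linearOrder WellOrderingRel
  let b' := (Module.Basis.sumExtend hli).reindex toLex
  have hb' : ∀ a, b' ((toLex ∘ Sum.inl) a) = f (bG a) := fun a => by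
    simp [b', Module.Basis.sumExtend_apply_inl]
  have hind : LinearIndependent K ((lift K ((ι K).comp f)).toLinearMap ∘ PBW.pbwBasis bG) := by
    have hmap : (lift K ((ι K).comp f)).toLinearMap ∘ PBW.pbwBasis bG =
        PBW.orderedMonomial b' ∘ Multiset.map (toLex ∘ Sum.inl) := funext fun m => by
      simp [PBW.pbwBasis_apply, PBW.lift_comp_orderedMonomial bG f Sum.Lex.inl_strictMono hb']
    rw [hmap]
    exact (PBW.linearIndependent_orderedMonomial b').comp _
      (Multiset.map_injective Sum.Lex.inl_strictMono.injective)
  exact (PBW.pbwBasis bG).injective_of_linearIndependent_comp hind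
end

section
/- For any group G and any subgroup H, the map D_H : H/[H,H] → Z[G]·I(H) / I(G)·I(H) given by h[H,H] ↦ h − 1 + I(G)I(H) is a well-defined isomorphism of abelian groups. -/
open MonoidAlgebra

/-- The left ideal `ℤ[G]·I(H)`: the additive subgroup generated by `g·(h−1)`. -/
noncomputable def ZIH (G : Type*) [Group G] (H : Subgroup G) :
    Submodule ℤ (MonoidAlgebra ℤ G) :=
  Submodule.span ℤ
    {x | ∃ (g : G) (h : G), h ∈ H ∧
      x = MonoidAlgebra.of ℤ G g * (MonoidAlgebra.of ℤ G h - 1)}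

/-!
The map `h ↦ h - 1` is additive modulo `I(G)I(H)` because
`h₁h₂ - 1 - (h₁ - 1) - (h₂ - 1) = (h₁ - 1)(h₂ - 1)`. An inverse comes from a choice of
representatives `t(gH)` of the left cosets of `H`: `g ↦ [t(gH)⁻¹ g]` extends linearly to a map
`ℤ[G] → H^{ab}` sending `g(h - 1)` to `[h]`, hence killing `(g - 1)(h - 1) = g(h - 1) - (h - 1)`.
The same identity shows that modulo `I(G)I(H)` each generator `g(h - 1)` of `ℤ[G]I(H)` is
congruent to `h - 1`.
-/

section Whitcomb

variable {G : Type*} [Group G] (H : Subgroup G)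

theorem of_sub_one_mem_ZIH {h : G} (hh : h ∈ H) : of ℤ G h - 1 ∈ ZIH G H :=
  Submodule.subset_span ⟨1, h, hh, by rw [map_one, one_mul]⟩

theorem of_sub_one_mul_of_sub_one_mem (g : G) {h : G} (hh : h ∈ H) :
    (of ℤ G g - 1) * (of ℤ G h - 1) ∈ augI G * relAug G H :=
  Submodule.mul_mem_mul (Submodule.subset_span ⟨g, rfl⟩) (Submodule.subset_span ⟨h, hh, rfl⟩)

abbrev WhitcombQuotient : Type _ :=
  ↥(ZIH G H) ⧸ (augI G * relAug G H).comap (ZIH G H).subtype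

theorem whitcombQuotient_mk_eq_iff {x y : MonoidAlgebra ℤ G} (hx : x ∈ ZIH G H)
    (hy : y ∈ ZIH G H) :
    (Submodule.Quotient.mk ⟨x, hx⟩ : WhitcombQuotient H) = Submodule.Quotient.mk ⟨y, hy⟩ ↔
      x - y ∈ augI G * relAug G H :=
  Submodule.Quotient.eq _

noncomputable def subOneClass (h : H) : WhitcombQuotient H :=
  Submodule.Quotient.mk ⟨of ℤ G h - 1, of_sub_one_mem_ZIH H h.2⟩

theorem subOneClass_mul (h₁ h₂ : H) :
    subOneClass H (h₁ * h₂) = subOneClass H h₁ + subOneClass H h₂ := by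
  rw [subOneClass, subOneClass, subOneClass, ← Submodule.Quotient.mk_add]
  refine (whitcombQuotient_mk_eq_iff H _ _).2 ?_
  convert of_sub_one_mul_of_sub_one_mem H h₁ h₂.2 using 1
  simp only [Subgroup.coe_mul, map_mul]
  noncomm_ring

noncomputable def subOneHom : Additive (Abelianization H) →+ WhitcombQuotient H :=
  MonoidHom.toAdditiveLeft <| Abelianization.lift <|
    MonoidHom.mk' (fun h ↦ Multiplicative.ofAdd (subOneClass H h)) (subOneClass_mul H)

theorem subOneHom_ofMul_of (h : H) :
    subOneHom H (Additive.ofMul (Abelianization.of h)) = subOneClass H h := by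
  rfl

noncomputable def outInvMul (g : G) : H :=
  ⟨(g : G ⧸ H).out⁻¹ * g, QuotientGroup.eq.1 (QuotientGroup.out_eq' _)⟩

theorem outInvMul_mul_of_mem (g : G) {h : G} (hh : h ∈ H) :
    outInvMul H (g * h) = outInvMul H g * ⟨h, hh⟩ := by
  ext
  simp only [outInvMul, Subgroup.coe_mul, QuotientGroup.mk_mul_of_mem g hh, mul_assoc]

noncomputable def outInvMulLinear : MonoidAlgebra ℤ G →ₗ[ℤ] Additive (Abelianization H) :=
  Finsupp.linearCombination ℤ (fun g ↦ Additive.ofMul (Abelianization.of (outInvMul H g))) ∘ₗ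
    (coeffLinearEquiv ℤ).toLinearMap

theorem outInvMulLinear_of (g : G) :
    outInvMulLinear H (of ℤ G g) = Additive.ofMul (Abelianization.of (outInvMul H g)) := by
  simp [outInvMulLinear]

theorem outInvMulLinear_of_mul_of_sub_one (g : G) {h : G} (hh : h ∈ H) :
    outInvMulLinear H (of ℤ G g * (of ℤ G h - 1)) = Additive.ofMul (Abelianization.of ⟨h, hh⟩) := by
  rw [mul_sub, mul_one, ← map_mul, map_sub, outInvMulLinear_of, outInvMulLinear_of,
    outInvMul_mul_of_mem H g hh, map_mul, ofMul_mul, add_sub_cancel_left]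

theorem outInvMulLinear_of_sub_one {h : G} (hh : h ∈ H) :
    outInvMulLinear H (of ℤ G h - 1) = Additive.ofMul (Abelianization.of ⟨h, hh⟩) := by
  simpa only [map_one, one_mul] using outInvMulLinear_of_mul_of_sub_one H 1 hh

theorem augI_mul_relAug_le_ker_outInvMulLinear :
    augI G * relAug G H ≤ LinearMap.ker (outInvMulLinear H) := by
  rw [augI, relAug, Submodule.span_mul_span, Submodule.span_le]
  rintro _ ⟨_, ⟨g, rfl⟩, _, ⟨h, hh, rfl⟩, rfl⟩
  change outInvMulLinear H ((of ℤ G g - 1) * (of ℤ G h - 1)) = 0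
  rw [sub_mul, one_mul, map_sub, outInvMulLinear_of_mul_of_sub_one H g hh,
    outInvMulLinear_of_sub_one H hh, sub_self]

noncomputable def outInvMulQuot : WhitcombQuotient H →ₗ[ℤ] Additive (Abelianization H) :=
  Submodule.liftQ _ (outInvMulLinear H ∘ₗ (ZIH G H).subtype)
    fun _ hx ↦ augI_mul_relAug_le_ker_outInvMulLinear H hx

theorem outInvMulQuot_subOneHom (a : Additive (Abelianization H)) :
    outInvMulQuot H (subOneHom H a) = a := by
  induction a using QuotientGroup.induction_on with | H h => ?_
  exact outInvMulLinear_of_sub_one H h.2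

theorem subOneHom_comp_outInvMulLinear :
    (subOneHom H).toIntLinearMap ∘ₗ outInvMulLinear H ∘ₗ (ZIH G H).subtype =
      ((augI G * relAug G H).comap (ZIH G H).subtype).mkQ := by
  refine LinearMap.ext_on Submodule.span_span_coe_preimage ?_
  rintro ⟨_, hx⟩ ⟨g, h, hh, rfl⟩
  simp only [LinearMap.comp_apply, Submodule.coe_subtype, AddMonoidHom.coe_toIntLinearMap,
    Submodule.mkQ_apply, outInvMulLinear_of_mul_of_sub_one H g hh, subOneHom_ofMul_of, subOneClass]
  refine (whitcombQuotient_mk_eq_iff H _ _).2 ?_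
  convert neg_mem (of_sub_one_mul_of_sub_one_mem H g hh) using 1
  noncomm_ring

theorem subOneHom_outInvMulQuot (q : WhitcombQuotient H) :
    subOneHom H (outInvMulQuot H q) = q := by
  induction q using Submodule.Quotient.induction_on with | H x => ?_
  exact LinearMap.congr_fun (subOneHom_comp_outInvMulLinear H) x

noncomputable def whitcombEquiv : Additive (Abelianization H) ≃+ WhitcombQuotient H :=
  { subOneHom H with
    invFun := outInvMulQuot H
    left_inv := outInvMulQuot_subOneHom H
    right_inv := subOneHom_outInvMulQuot H }

end Whitcomb

/-- Whitcomb's isomorphism: for any subgroup `H ≤ G`, the map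
`D_H : H/[H,H] → ℤ[G]I(H)/I(G)I(H)`, `h[H,H] ↦ h − 1 + I(G)I(H)`, is a well-defined
isomorphism of abelian groups. -/
theorem stmt15 (G : Type*) [Group G] (H : Subgroup G) :
    ∃ e : Additive (Abelianization H) ≃+
        (↥(ZIH G H) ⧸ (augI G * relAug G H).comap (ZIH G H).subtype),
      ∀ (h : H) (hm : MonoidAlgebra.of ℤ G (h : G) - 1 ∈ ZIH G H),
        e (Additive.ofMul (Abelianization.of h)) =
          Submodule.Quotient.mk (⟨MonoidAlgebra.of ℤ G (h : G) - 1, hm⟩ : ↥(ZIH G H)) :=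
  ⟨whitcombEquiv H, fun h _ ↦ subOneHom_ofMul_of H h⟩
end

section
/- Let G be a group with N-series 𝒢, and let 𝒢 induce the 2-truncated structure maps. Then the sequence G^{AB} ∧ G^{AB} → (G_{(2)}/G_{(3)}) ⊕ (G^{AB} ⊗ G^{AB}) → Q_2^𝒢(G) → 0 is exact, where the first map is (c_2, −l_2) with c_2(ā ∧ b̄) = [a,b]G_{(3)} and l_2(ā ∧ b̄) = ā ⊗ b̄ − b̄ ⊗ ā, and the second map sends (aG_{(3)}, ā ⊗ b̄) to (a−1) + (a−1)(b−1) mod I_𝒢^3(G). -/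
open MonoidAlgebra TensorProduct
open scoped commutatorElement

/-- The filtration ideal `I_𝒢^n(G) ⊆ ℤ[G]` associated to an N-series `Gs`. -/
noncomputable def nIdeal (G : Type*) [Group G] (Gs : ℕ → Subgroup G) (n : ℕ) :
    Submodule ℤ (MonoidAlgebra ℤ G) :=
  Submodule.span ℤ
    {x | ∃ l : List (ℕ × G), l ≠ [] ∧ (∀ p ∈ l, 1 ≤ p.1 ∧ p.2 ∈ Gs p.1) ∧
      n ≤ (l.map Prod.fst).sum ∧
      x = (l.map fun p => MonoidAlgebra.of ℤ G p.2 - 1).prod}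

/-! The composite vanishes because `[g, h] - 1 ≡ (g - 1)(h - 1) - (h - 1)(g - 1)` modulo `I³`,
and `g₂` is onto because `I²` is spanned modulo `I³` by the `a - 1` with `a ∈ G₂` and the
`(x - 1)(y - 1)`. For exactness in the middle we build a left inverse of `g₂` with values in the
cokernel `C` of `f`. Fix a set-theoretic section `s` of `G → G^{AB}`, let `γ` be `β` followed by
the projection to `C` and `μ a b` the class of `a ⊗ b`. Then
`ω a b = γ (s a * s b * (s (a + b))⁻¹) - μ a b` is a 2-cocycle, symmetric precisely because of
the relations imposed by `f`, so `C × G^{AB}` with `ω`-twisted addition is an abelian group `W`.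
Multiplying through `μ` makes `W` a ring with `W * W ⊆ C` and `W³ = 0`, and
`g ↦ 1 + (γ (g * (s ḡ)⁻¹), ḡ)` is multiplicative into `ℤ ⊕ W`. Its extension to `ℤ[G]` maps
`I^n` into the `n`-th step of the obvious filtration of `ℤ ⊕ W`, which vanishes for `n = 3`; on
`I²` its `C`-component is the required map `Q₂ → C`. -/

structure IsNSeries {G : Type*} [Group G] (Gs : ℕ → Subgroup G) : Prop where
  one_eq_top : Gs 1 = ⊤
  succ_le : ∀ i, Gs (i + 1) ≤ Gs i
  commutator_mem : ∀ i j, ∀ a ∈ Gs i, ∀ b ∈ Gs j, ⁅a, b⁆ ∈ Gs (i + j)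

namespace IsNSeries

variable {G : Type*} [Group G] {Gs : ℕ → Subgroup G}

lemma antitone (hGs : IsNSeries Gs) : Antitone Gs := antitone_nat_of_succ_le hGs.succ_le

lemma mem_one (hGs : IsNSeries Gs) (g : G) : g ∈ Gs 1 := hGs.one_eq_top ▸ Subgroup.mem_top g

lemma commutator_mem_two (hGs : IsNSeries Gs) (g h : G) : ⁅g, h⁆ ∈ Gs 2 :=
  hGs.commutator_mem 1 1 g (hGs.mem_one g) h (hGs.mem_one h)

lemma commutator_mem_succ (hGs : IsNSeries Gs) (g : G) {i : ℕ} {u : G} (hu : u ∈ Gs i) :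
    ⁅g, u⁆ ∈ Gs (i + 1) :=
  add_comm 1 i ▸ hGs.commutator_mem 1 i g (hGs.mem_one g) u hu

lemma conj_mem (hGs : IsNSeries Gs) (g : G) {i : ℕ} {u : G} (hu : u ∈ Gs i) :
    g * u * g⁻¹ ∈ Gs i := by
  rw [show g * u * g⁻¹ = ⁅g, u⁆ * u by rw [commutatorElement_def]; group]
  exact mul_mem (hGs.succ_le i (hGs.commutator_mem_succ g hu)) hu

end IsNSeries

section nIdeal

variable {G : Type*} [Group G] {Gs : ℕ → Subgroup G}

lemma nIdeal_antitone : Antitone (nIdeal G Gs) := fun _ _ hmn =>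
  Submodule.span_mono fun _ ⟨l, hne, hl, hsum, hx⟩ => ⟨l, hne, hl, hmn.trans hsum, hx⟩

lemma of_sub_one_mem_nIdeal {k : ℕ} (hk : 1 ≤ k) {u : G} (hu : u ∈ Gs k) :
    of ℤ G u - 1 ∈ nIdeal G Gs k :=
  Submodule.subset_span ⟨[(k, u)], by simp, by simpa using ⟨hk, hu⟩, by simp, by simp⟩

lemma of_sub_one_mul_mem_nIdeal_two (h1 : Gs 1 = ⊤) (x y : G) :
    (of ℤ G x - 1) * (of ℤ G y - 1) ∈ nIdeal G Gs 2 :=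
  Submodule.subset_span ⟨[(1, x), (1, y)], by simp, by simp [h1], by simp, by simp⟩

lemma of_sub_one_mul_mul_mem_nIdeal_three (h1 : Gs 1 = ⊤) (x y z : G) :
    (of ℤ G x - 1) * (of ℤ G y - 1) * (of ℤ G z - 1) ∈ nIdeal G Gs 3 :=
  Submodule.subset_span
    ⟨[(1, x), (1, y), (1, z)], by simp, by simp [h1], by simp, by simp [mul_assoc]⟩

lemma of_commutator_sub_one_sub_mem_nIdeal_three (h1 : Gs 1 = ⊤) (g h : G) :
    (of ℤ G ⁅g, h⁆ - 1) - ((of ℤ G g - 1) * (of ℤ G h - 1) - (of ℤ G h - 1) * (of ℤ G g - 1))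
      ∈ nIdeal G Gs 3 := by
  set X := of ℤ G g
  set Y := of ℤ G h
  set K := of ℤ G (h * g)⁻¹
  have hYXK : Y * X * K = 1 := by rw [← map_mul, ← map_mul, mul_inv_cancel, map_one]
  have hXYK : of ℤ G ⁅g, h⁆ = X * Y * K := by
    simp only [X, Y, K, ← map_mul, commutatorElement_def, mul_inv_rev, mul_assoc]
  have key : (X * Y * K - 1) - ((X - 1) * (Y - 1) - (Y - 1) * (X - 1)) =
      (X - 1) * (Y - 1) * (K - 1) - (Y - 1) * (X - 1) * (K - 1) + (Y * X * K - 1) := by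
    noncomm_ring
  rw [hXYK, key, hYXK, sub_self, add_zero]
  exact sub_mem (of_sub_one_mul_mul_mem_nIdeal_three h1 g h _)
    (of_sub_one_mul_mul_mem_nIdeal_three h1 h g _)

lemma nIdeal_two_le_sup :
    nIdeal G Gs 2 ≤ nIdeal G Gs 3 ⊔ Submodule.span ℤ (Set.range fun u : Gs 2 => of ℤ G u - 1) ⊔
      Submodule.span ℤ (Set.range fun p : G × G => (of ℤ G p.1 - 1) * (of ℤ G p.2 - 1)) := by
  refine Submodule.span_le.2 ?_
  rintro _ ⟨l, hne, hl, hsum, rfl⟩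
  by_cases h3 : 3 ≤ (l.map Prod.fst).sum
  · exact Submodule.mem_sup_left (Submodule.mem_sup_left
      (Submodule.subset_span ⟨l, hne, hl, h3, rfl⟩))
  match l, hl with
  | [], _ => exact absurd rfl hne
  | [(k, u)], hl =>
    have hk : k = 2 := by simp at hsum h3; omega
    subst hk
    exact Submodule.mem_sup_left (Submodule.mem_sup_right
      (Submodule.subset_span ⟨⟨u, (hl (2, u) (by simp)).2⟩, by simp⟩))
  | [p, q], _ =>
    exact Submodule.mem_sup_right (Submodule.subset_span ⟨(p.2, q.2), by simp⟩)
  | p :: q :: r :: l, hl =>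
    have := (hl p (by simp)).1
    have := (hl q (by simp)).1
    have := (hl r (by simp)).1
    simp at h3
    omega

end nIdeal

/-- A normalized symmetric 2-cocycle `ω`, making `C × A` an abelian extension `Ext` of `A` by
`C`, together with a bilinear `μ` that turns `Ext` into a ring with `Ext * Ext ⊆ C`. -/
structure CocycleData (A C : Type*) [AddCommGroup A] [AddCommGroup C] where
  ω : A → A → C
  μ : A →ₗ[ℤ] A →ₗ[ℤ] C
  ω_zero_right : ∀ a, ω a 0 = 0
  ω_add : ∀ a b d, ω a b + ω (a + b) d = ω b d + ω a (b + d)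
  ω_comm : ∀ a b, ω a b = ω b a

namespace CocycleData

variable {A C : Type*} [AddCommGroup A] [AddCommGroup C] (D : CocycleData A C)

lemma ω_zero_left (a : A) : D.ω 0 a = 0 := by rw [D.ω_comm, D.ω_zero_right]

def Ext (_ : CocycleData A C) : Type _ := C × A

namespace Ext

instance : Add D.Ext := ⟨fun x y => (x.1 + y.1 + D.ω x.2 y.2, x.2 + y.2)⟩
instance : Zero D.Ext := ⟨((0 : C), (0 : A))⟩
instance : Neg D.Ext := ⟨fun x => (-x.1 - D.ω (-x.2) x.2, -x.2)⟩

instance : AddCommGroup D.Ext :=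
  { AddGroup.ofLeftAxioms (G := D.Ext)
      (fun x y z => Prod.ext (by
        show x.1 + y.1 + D.ω x.2 y.2 + z.1 + D.ω (x.2 + y.2) z.2 =
          x.1 + (y.1 + z.1 + D.ω y.2 z.2) + D.ω x.2 (y.2 + z.2)
        have := D.ω_add x.2 y.2 z.2
        rw [← sub_eq_zero] at this ⊢
        rw [← this]
        abel) (add_assoc _ _ _))
      (fun x => Prod.ext (by
        show 0 + x.1 + D.ω 0 x.2 = x.1
        rw [D.ω_zero_left, zero_add, add_zero]) (zero_add _))
      (fun x => Prod.ext (by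
        show -x.1 - D.ω (-x.2) x.2 + x.1 + D.ω (-x.2) x.2 = 0
        abel) (neg_add_cancel _)) with
    add_comm := fun x y => Prod.ext (by
      show x.1 + y.1 + D.ω x.2 y.2 = y.1 + x.1 + D.ω y.2 x.2
      rw [D.ω_comm, add_comm x.1]) (add_comm _ _) }

def inl : C →+ D.Ext where
  toFun c := (c, 0)
  map_zero' := rfl
  map_add' c c' := Prod.ext (by
    show c + c' = c + c' + D.ω 0 0
    rw [D.ω_zero_right, add_zero]) (add_zero 0).symm

def snd : D.Ext →+ A where
  toFun x := x.2
  map_zero' := rfl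
  map_add' _ _ := rfl

@[simp] lemma snd_inl (c : C) : snd D (inl D c) = 0 := rfl

instance : NonUnitalRing D.Ext :=
  { (inferInstance : AddCommGroup D.Ext) with
    mul := fun x y => inl D (D.μ (snd D x) (snd D y))
    left_distrib := fun x y z => by
      show inl D _ = inl D _ + inl D _
      rw [map_add, map_add, map_add]
    right_distrib := fun x y z => by
      show inl D _ = inl D _ + inl D _
      rw [map_add, map_add, LinearMap.add_apply, map_add]
    zero_mul := fun x => by
      show inl D _ = 0
      rw [map_zero, map_zero, LinearMap.zero_apply, map_zero]
    mul_zero := fun x => by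
      show inl D _ = 0
      rw [map_zero, map_zero, map_zero]
    mul_assoc := fun x y z => by
      show inl D (D.μ (snd D (inl D _)) _) = inl D (D.μ _ (snd D (inl D _)))
      rw [snd_inl, snd_inl, map_zero, map_zero, LinearMap.zero_apply] }

lemma mul_def (x y : D.Ext) : x * y = inl D (D.μ (snd D x) (snd D y)) := rfl

end Ext

open Ext

def filtration (n : ℕ) : AddSubgroup (Unitization ℤ D.Ext) where
  carrier := {r | (1 ≤ n → r.fst = 0) ∧ (2 ≤ n → snd D r.snd = 0) ∧ (3 ≤ n → r = 0)}
  zero_mem' := ⟨fun _ => rfl, fun _ => map_zero _, fun _ => rfl⟩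
  add_mem' := by
    rintro r s ⟨hr1, hr2, hr3⟩ ⟨hs1, hs2, hs3⟩
    refine ⟨fun h => ?_, fun h => ?_, fun h => ?_⟩
    · rw [Unitization.fst_add, hr1 h, hs1 h, add_zero]
    · rw [Unitization.snd_add, map_add, hr2 h, hs2 h, add_zero]
    · rw [hr3 h, hs3 h, add_zero]
  neg_mem' := by
    rintro r ⟨hr1, hr2, hr3⟩
    refine ⟨fun h => ?_, fun h => ?_, fun h => ?_⟩
    · rw [Unitization.fst_neg, hr1 h, neg_zero]
    · rw [Unitization.snd_neg, map_neg, hr2 h, neg_zero]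
    · rw [hr3 h, neg_zero]

instance : SetLike.GradedMonoid D.filtration where
  one_mem := ⟨fun h => absurd h (by omega), fun h => absurd h (by omega),
    fun h => absurd h (by omega)⟩
  mul_mem := by
    rintro i j r s ⟨hr1, hr2, hr3⟩ ⟨hs1, hs2, hs3⟩
    refine ⟨fun h => ?_, fun h => ?_, fun h => ?_⟩
    · rw [Unitization.fst_mul]
      rcases Nat.lt_or_ge i 1 with hi | hi
      · rw [hs1 (by omega), mul_zero]
      · rw [hr1 hi, zero_mul]
    · rw [Unitization.snd_mul, map_add, map_add, map_zsmul, map_zsmul, Ext.mul_def, snd_inl,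
        add_zero]
      rcases Nat.lt_or_ge i 1 with hi | hi
      · rw [hs1 (by omega), hs2 (by omega), smul_zero, zero_smul, add_zero]
      rcases Nat.lt_or_ge i 2 with hi' | hi'
      · rw [hr1 hi, hs1 (by omega), zero_smul, zero_smul, add_zero]
      · rw [hr1 hi, hr2 hi', zero_smul, smul_zero, add_zero]
    · rcases Nat.lt_or_ge i 3 with hi | hi
      · rcases Nat.lt_or_ge j 3 with hj | hj
        · have hμ : D.μ (snd D r.snd) (snd D s.snd) = 0 := by
            rcases Nat.lt_or_ge i 2 with hi2 | hi2
            · rw [hs2 (by omega), map_zero]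
            · rw [hr2 hi2, map_zero, LinearMap.zero_apply]
          refine Unitization.ext ?_ ?_
          · rw [Unitization.fst_mul, hr1 (by omega), zero_mul, Unitization.fst_zero]
          · rw [Unitization.snd_mul, hr1 (by omega), hs1 (by omega), zero_smul, zero_smul,
              zero_add, zero_add, Ext.mul_def, hμ, map_zero, Unitization.snd_zero]
        · rw [hs3 hj, mul_zero]
      · rw [hr3 hi, zero_mul]

lemma filtration_antitone : Antitone D.filtration := fun _ _ hmn _ ⟨h1, h2, h3⟩ =>
  ⟨fun h => h1 (h.trans hmn), fun h => h2 (h.trans hmn), fun h => h3 (h.trans hmn)⟩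

def filtrationTwoFst : D.filtration 2 →+ C where
  toFun r := r.1.snd.1
  map_zero' := rfl
  map_add' r s := by
    have hr : r.1.snd.2 = 0 := r.2.2.1 le_rfl
    have hs : s.1.snd.2 = 0 := s.2.2.1 le_rfl
    show r.1.snd.1 + s.1.snd.1 + D.ω r.1.snd.2 s.1.snd.2 = _
    rw [hr, hs, D.ω_zero_right, add_zero]

end CocycleData

section
variable {G : Type*} [Group G] {Gs : ℕ → Subgroup G}

lemma lift_mem_of_mem_nIdeal {R : Type*} [Ring R] [Algebra ℤ R] {F : ℕ → AddSubgroup R}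
    [SetLike.GradedMonoid F] (hF : Antitone F) {Φ : G →* R}
    (hΦ : ∀ k, 1 ≤ k → ∀ u ∈ Gs k, Φ u - 1 ∈ F k) {n : ℕ} {x : MonoidAlgebra ℤ G}
    (hx : x ∈ nIdeal G Gs n) : MonoidAlgebra.lift ℤ R G Φ x ∈ F n := by
  induction hx using Submodule.span_induction with
  | mem y hy =>
    obtain ⟨l, -, hl, hsum, rfl⟩ := hy
    rw [map_list_prod, List.map_map]
    refine hF hsum (SetLike.list_prod_map_mem_graded l _ _ fun p hp => ?_)
    simpa only [Function.comp_apply, map_sub, map_one, MonoidAlgebra.lift_of]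
      using hΦ p.1 (hl p hp).1 p.2 (hl p hp).2
  | zero => rw [map_zero]; exact zero_mem _
  | add x y _ _ hx hy => rw [map_add]; exact add_mem hx hy
  | smul z x _ hx => rw [map_zsmul]; exact zsmul_mem hx z

end

section
variable {G A C : Type*} [Group G] [AddCommGroup A] [AddCommGroup C] {Gs : ℕ → Subgroup G}

theorem CocycleData.exists_linearMap_quotient_nIdeal (D : CocycleData A C)
    {Φ : G →* Unitization ℤ D.Ext} (hΦ : ∀ k, 1 ≤ k → ∀ u ∈ Gs k, Φ u - 1 ∈ D.filtration k) :
    ∃ ψ : (↥(nIdeal G Gs 2) ⧸ (nIdeal G Gs 3).comap (nIdeal G Gs 2).subtype) →ₗ[ℤ] C,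
      ∀ x (hx : x ∈ nIdeal G Gs 2),
        ψ (Submodule.Quotient.mk ⟨x, hx⟩) =
          (MonoidAlgebra.lift ℤ (Unitization ℤ D.Ext) G Φ x).snd.1 := by
  have hΘ {n x} (hx : x ∈ nIdeal G Gs n) :=
    lift_mem_of_mem_nIdeal (R := Unitization ℤ D.Ext) (Φ := Φ) D.filtration_antitone hΦ hx
  let Θ := MonoidAlgebra.lift ℤ (Unitization ℤ D.Ext) G Φ
  let θ : ↥(nIdeal G Gs 2) →ₗ[ℤ] C := (D.filtrationTwoFst.comp
    ((Θ.toAddMonoidHom.comp (nIdeal G Gs 2).subtype.toAddMonoidHom).codRestrict _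
      fun x => hΘ x.2)).toIntLinearMap
  refine ⟨(nIdeal G Gs 3).comap (nIdeal G Gs 2).subtype |>.liftQ θ fun x hx => ?_,
    fun x hx => rfl⟩
  have h0 : Θ x = 0 := (hΘ hx).2.2 le_rfl
  show (Θ x).snd.1 = 0
  rw [h0]
  rfl

open CocycleData.Ext in
theorem CocycleData.exists_linearMap_quotient_nIdeal_of_mul (D : CocycleData A C)
    (hanti : Antitone Gs) {η : G → D.Ext} (hη : ∀ g h, η (g * h) = η g + η h + η g * η h)
    (hη1 : η 1 = 0) (hη2 : ∀ u ∈ Gs 2, snd D (η u) = 0) (hη3 : ∀ u ∈ Gs 3, η u = 0) :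
    ∃ ψ : (↥(nIdeal G Gs 2) ⧸ (nIdeal G Gs 3).comap (nIdeal G Gs 2).subtype) →ₗ[ℤ] C,
      (∀ u (hu : of ℤ G u - 1 ∈ nIdeal G Gs 2),
        ψ (Submodule.Quotient.mk ⟨of ℤ G u - 1, hu⟩) = (η u).1) ∧
      ∀ x y (hxy : (of ℤ G x - 1) * (of ℤ G y - 1) ∈ nIdeal G Gs 2),
        ψ (Submodule.Quotient.mk ⟨_, hxy⟩) = D.μ (snd D (η x)) (snd D (η y)) := by
  let Φ : G →* Unitization ℤ D.Ext :=
    { toFun g := 1 + η g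
      map_one' := by rw [hη1, Unitization.inr_zero, add_zero]
      map_mul' g h := by
        rw [hη, Unitization.inr_add, Unitization.inr_add, Unitization.inr_mul, mul_add, add_mul,
          add_mul, one_mul, mul_one, one_mul]
        abel }
  have hΦ (g : G) : Φ g - 1 = η g := add_sub_cancel_left 1 _
  obtain ⟨ψ, hψ⟩ := D.exists_linearMap_quotient_nIdeal (Φ := Φ) fun k hk u hu => by
    rw [hΦ]
    refine ⟨fun _ => rfl, fun h2 => hη2 u (hanti h2 hu), fun h3 => ?_⟩
    rw [hη3 u (hanti h3 hu), Unitization.inr_zero]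
  have hlift (g : G) : MonoidAlgebra.lift ℤ (Unitization ℤ D.Ext) G Φ (of ℤ G g - 1) = η g := by
    rw [← map_one (of ℤ G), map_sub, MonoidAlgebra.lift_of, MonoidAlgebra.lift_of, map_one, hΦ]
  refine ⟨ψ, fun u hu => by rw [hψ, hlift]; rfl, fun x y hxy => ?_⟩
  rw [hψ, map_mul, hlift, hlift, ← Unitization.inr_mul]
  rfl

end

section

variable {G A C : Type*} [Group G] {Gs : ℕ → Subgroup G} {α : G → A} {γ : G → C} {s : A → G}

lemma map_one_of_map_mul_mem {M : Type*} [AddGroup M] {H : Subgroup G} {φ : G → M}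
    (hφ : ∀ g ∈ H, ∀ h ∈ H, φ (g * h) = φ g + φ h) : φ 1 = 0 := by
  simpa using hφ 1 (one_mem H) 1 (one_mem H)

lemma map_inv_of_map_mul [AddGroup A] (hα : ∀ g h, α (g * h) = α g + α h) (g : G) :
    α g⁻¹ = -α g := by
  rw [eq_neg_iff_add_eq_zero, ← hα, inv_mul_cancel,
    map_one_of_map_mul_mem (H := ⊤) fun g _ h _ => hα g h]

lemma exists_section [Zero A] (hα1 : α 1 = 0) (hαsurj : Function.Surjective α) :
    ∃ s : A → G, (∀ a, α (s a) = a) ∧ s 0 = 1 := by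
  classical
  refine ⟨Function.update (Function.surjInv hαsurj) 0 1, fun a => ?_, by simp⟩
  rcases eq_or_ne a 0 with rfl | ha
  · simpa using hα1
  · simp [ha, Function.surjInv_eq]

lemma mul_inv_section_mem [AddGroup A] (hα : ∀ g h, α (g * h) = α g + α h)
    (hαker : ∀ g, α g = 0 ↔ g ∈ Gs 2) (hs : ∀ a, α (s a) = a) (g : G) :
    g * (s (α g))⁻¹ ∈ Gs 2 :=
  (hαker _).1 (by rw [hα, map_inv_of_map_mul hα, hs, add_neg_cancel])

lemma map_conj_eq [AddMonoid C] (hGs : IsNSeries Gs)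
    (hγ : ∀ u ∈ Gs 2, ∀ v ∈ Gs 2, γ (u * v) = γ u + γ v) (hγ3 : ∀ u ∈ Gs 3, γ u = 0) (g : G)
    {u : G} (hu : u ∈ Gs 2) : γ (g * u * g⁻¹) = γ u := by
  have h3 := hGs.commutator_mem_succ g hu
  rw [show g * u * g⁻¹ = ⁅g, u⁆ * u by rw [commutatorElement_def]; group,
    hγ _ (hGs.succ_le 2 h3) _ hu, hγ3 _ h3, zero_add]

def liftAlong (α : G → A) (γ : G → C) (s : A → G) (g : G) : C := γ (g * (s (α g))⁻¹)

lemma liftAlong_of_mem [Zero A] (hαker : ∀ g, α g = 0 ↔ g ∈ Gs 2) (hs0 : s 0 = 1) {u : G}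
    (hu : u ∈ Gs 2) : liftAlong α γ s u = γ u := by
  simp [liftAlong, (hαker u).2 hu, hs0]

lemma liftAlong_section [Zero C] (hs : ∀ a, α (s a) = a) (hγ1 : γ 1 = 0) (a : A) :
    liftAlong α γ s (s a) = 0 := by
  simp [liftAlong, hs, hγ1]

lemma liftAlong_mul [AddGroup A] [AddMonoid C] (hGs : IsNSeries Gs)
    (hα : ∀ g h, α (g * h) = α g + α h) (hαker : ∀ g, α g = 0 ↔ g ∈ Gs 2) (hs : ∀ a, α (s a) = a)
    (hγ : ∀ u ∈ Gs 2, ∀ v ∈ Gs 2, γ (u * v) = γ u + γ v) (hγ3 : ∀ u ∈ Gs 3, γ u = 0)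
    (g h : G) : liftAlong α γ s (g * h) =
      liftAlong α γ s g + liftAlong α γ s h + liftAlong α γ s (s (α g) * s (α h)) := by
  have mem := mul_inv_section_mem hα hαker hs
  have hgh := mem (s (α g) * s (α h))
  simp only [liftAlong, hα, hs] at hgh ⊢
  rw [show g * h * (s (α g + α h))⁻¹ = (g * (s (α g))⁻¹) *
      (s (α g) * (h * (s (α h))⁻¹) * (s (α g))⁻¹) * (s (α g) * s (α h) * (s (α g + α h))⁻¹)
      by group,
    hγ _ (mul_mem (mem g) (hGs.conj_mem _ (mem h))) _ hgh,
    hγ _ (mem g) _ (hGs.conj_mem _ (mem h)), map_conj_eq hGs hγ hγ3 _ (mem h)]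

lemma liftAlong_section_mul_add [AddGroup A] [AddCommGroup C] (hGs : IsNSeries Gs)
    (hα : ∀ g h, α (g * h) = α g + α h) (hαker : ∀ g, α g = 0 ↔ g ∈ Gs 2)
    (hs : ∀ a, α (s a) = a) (hγ : ∀ u ∈ Gs 2, ∀ v ∈ Gs 2, γ (u * v) = γ u + γ v)
    (hγ3 : ∀ u ∈ Gs 3, γ u = 0) (a b d : A) :
    liftAlong α γ s (s a * s b) + liftAlong α γ s (s (a + b) * s d) =
      liftAlong α γ s (s b * s d) + liftAlong α γ s (s a * s (b + d)) := by
  have hγ1 : γ 1 = 0 := map_one_of_map_mul_mem hγ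
  -- expand `liftAlong` of `s a * s b * s d` along both bracketings
  have h1 := liftAlong_mul hGs hα hαker hs hγ hγ3 (s a * s b) (s d)
  have h2 := liftAlong_mul hGs hα hαker hs hγ hγ3 (s a) (s b * s d)
  simp only [hα, hs, liftAlong_section hs hγ1, add_zero, zero_add, ← mul_assoc] at h1 h2
  rw [← h1, h2]

lemma liftAlong_section_mul_sub_swap [AddCommGroup A] [AddCommGroup C] (hGs : IsNSeries Gs)
    (hα : ∀ g h, α (g * h) = α g + α h) (hαker : ∀ g, α g = 0 ↔ g ∈ Gs 2)
    (hs : ∀ a, α (s a) = a) (hs0 : s 0 = 1)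
    (hγ : ∀ u ∈ Gs 2, ∀ v ∈ Gs 2, γ (u * v) = γ u + γ v) (hγ3 : ∀ u ∈ Gs 3, γ u = 0)
    (a b : A) : liftAlong α γ s (s a * s b) - liftAlong α γ s (s b * s a) = γ ⁅s a, s b⁆ := by
  have hγ1 : γ 1 = 0 := map_one_of_map_mul_mem hγ
  have hcomm := hGs.commutator_mem_two (s a) (s b)
  have h := liftAlong_mul hGs hα hαker hs hγ hγ3 ⁅s a, s b⁆ (s b * s a)
  rw [show ⁅s a, s b⁆ * (s b * s a) = s a * s b by rw [commutatorElement_def]; group,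
    (hαker _).2 hcomm, hs0, one_mul, liftAlong_section hs hγ1, add_zero,
    liftAlong_of_mem hαker hs0 hcomm] at h
  rw [h, add_sub_cancel_right]

theorem exists_cocycleData_of_commutator [AddCommGroup A] [AddCommGroup C] (hGs : IsNSeries Gs)
    (hα : ∀ g h, α (g * h) = α g + α h) (hαsurj : Function.Surjective α)
    (hαker : ∀ g, α g = 0 ↔ g ∈ Gs 2) (hγ : ∀ u ∈ Gs 2, ∀ v ∈ Gs 2, γ (u * v) = γ u + γ v)
    (hγ3 : ∀ u ∈ Gs 3, γ u = 0) (μ : A →ₗ[ℤ] A →ₗ[ℤ] C)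
    (hγμ : ∀ g h, γ ⁅g, h⁆ = μ (α g) (α h) - μ (α h) (α g)) :
    ∃ (D : CocycleData A C) (η : G → D.Ext), D.μ = μ ∧
      (∀ g h, η (g * h) = η g + η h + η g * η h) ∧ (∀ g, CocycleData.Ext.snd D (η g) = α g) ∧
      ∀ u ∈ Gs 2, η u = CocycleData.Ext.inl D (γ u) := by
  obtain ⟨s, hs, hs0⟩ :=
    exists_section (map_one_of_map_mul_mem (H := ⊤) fun g _ h _ => hα g h) hαsurj
  have hγ1 : γ 1 = 0 := map_one_of_map_mul_mem hγ
  let D : CocycleData A C :=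
    { ω a b := liftAlong α γ s (s a * s b) - μ a b
      μ := μ
      ω_zero_right a := by rw [hs0, mul_one, liftAlong_section hs hγ1, map_zero, sub_zero]
      ω_add a b d := by
        have key := liftAlong_section_mul_add hGs hα hαker hs hγ hγ3 a b d
        simp only [map_add, LinearMap.add_apply]
        rw [← sub_eq_zero, ← sub_eq_zero.2 key]
        abel
      ω_comm a b := by
        have key := liftAlong_section_mul_sub_swap hGs hα hαker hs hs0 hγ hγ3 a b
        rw [hγμ, hs, hs] at key
        rw [sub_eq_sub_iff_sub_eq_sub, key] }
  refine ⟨D, fun g => (liftAlong α γ s g, α g), rfl, fun g h => ?_, fun _ => rfl,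
    fun u hu => Prod.ext (liftAlong_of_mem hαker hs0 hu) ((hαker u).2 hu)⟩
  refine Prod.ext ?_ (by show α (g * h) = α g + α h + 0; rw [hα, add_zero])
  show liftAlong α γ s (g * h) = liftAlong α γ s g + liftAlong α γ s h +
    (liftAlong α γ s (s (α g) * s (α h)) - μ (α g) (α h)) + μ (α g) (α h) +
      (liftAlong α γ s (s (α g + α h) * s 0) - μ (α g + α h) 0)
  rw [liftAlong_mul hGs hα hαker hs hγ hγ3, hs0, mul_one, liftAlong_section hs hγ1, map_zero,
    sub_zero, add_zero, add_assoc _ (_ - _), sub_add_cancel]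

end

section
variable {G A C : Type*} [Group G] [AddCommGroup A] [AddCommGroup C] {Gs : ℕ → Subgroup G}
  {α : G → A} {γ : G → C}

theorem exists_linearMap_quotient_nIdeal_two (hGs : IsNSeries Gs)
    (hα : ∀ g h, α (g * h) = α g + α h) (hαsurj : Function.Surjective α)
    (hαker : ∀ g, α g = 0 ↔ g ∈ Gs 2) (hγ : ∀ u ∈ Gs 2, ∀ v ∈ Gs 2, γ (u * v) = γ u + γ v)
    (hγ3 : ∀ u ∈ Gs 3, γ u = 0) (μ : A →ₗ[ℤ] A →ₗ[ℤ] C)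
    (hγμ : ∀ g h, γ ⁅g, h⁆ = μ (α g) (α h) - μ (α h) (α g)) :
    ∃ ψ : (↥(nIdeal G Gs 2) ⧸ (nIdeal G Gs 3).comap (nIdeal G Gs 2).subtype) →ₗ[ℤ] C,
      (∀ u ∈ Gs 2, ∀ hu : of ℤ G u - 1 ∈ nIdeal G Gs 2,
        ψ (Submodule.Quotient.mk ⟨of ℤ G u - 1, hu⟩) = γ u) ∧
      ∀ x y (hxy : (of ℤ G x - 1) * (of ℤ G y - 1) ∈ nIdeal G Gs 2),
        ψ (Submodule.Quotient.mk ⟨_, hxy⟩) = μ (α x) (α y) := by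
  obtain ⟨D, η, rfl, hη, hηα, hη2⟩ :=
    exists_cocycleData_of_commutator hGs hα hαsurj hαker hγ hγ3 μ hγμ
  have hγ1 : γ 1 = 0 := map_one_of_map_mul_mem hγ
  obtain ⟨ψ, hψ1, hψ2⟩ := D.exists_linearMap_quotient_nIdeal_of_mul hGs.antitone hη
    (by rw [hη2 1 (one_mem _), hγ1, map_zero])
    (fun u hu => by rw [hηα, (hαker u).2 hu])
    (fun u hu => by rw [hη2 u (hGs.succ_le 2 hu), hγ3 u hu, map_zero])
  exact ⟨ψ, fun u hu hm => by rw [hψ1, hη2 u hu]; rfl, fun x y hxy => by rw [hψ2, hηα, hηα]⟩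

end

section
variable {G A B2 : Type*} [Group G] [AddCommGroup A] [AddCommGroup B2] {Gs : ℕ → Subgroup G}
  {α : G → A} {β : ↥(Gs 2) → B2}

lemma range_le_ker (hGs : IsNSeries Gs) (hαsurj : Function.Surjective α)
    {f : ↥(⋀[ℤ]^2 A) →ₗ[ℤ] B2 × (A ⊗[ℤ] A)}
    (hf : ∀ (g h : G) (hgh : ⁅g, h⁆ ∈ Gs 2)
      (hm : ExteriorAlgebra.ιMulti ℤ 2 ![α g, α h] ∈ ⋀[ℤ]^2 A),
      f ⟨ExteriorAlgebra.ιMulti ℤ 2 ![α g, α h], hm⟩ =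
        (β ⟨⁅g, h⁆, hgh⟩, -(α g ⊗ₜ[ℤ] α h - α h ⊗ₜ[ℤ] α g)))
    {g₂ : (B2 × (A ⊗[ℤ] A)) →ₗ[ℤ]
      (↥(nIdeal G Gs 2) ⧸ (nIdeal G Gs 3).comap (nIdeal G Gs 2).subtype)}
    (hg₂a : ∀ (a : ↥(Gs 2)) (hm : of ℤ G (a : G) - 1 ∈ nIdeal G Gs 2),
      g₂ (β a, 0) = Submodule.Quotient.mk (⟨of ℤ G (a : G) - 1, hm⟩ : ↥(nIdeal G Gs 2)))
    (hg₂b : ∀ (x y : G) (hm : (of ℤ G x - 1) * (of ℤ G y - 1) ∈ nIdeal G Gs 2),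
      g₂ (0, α x ⊗ₜ[ℤ] α y) = Submodule.Quotient.mk
        (⟨(of ℤ G x - 1) * (of ℤ G y - 1), hm⟩ : ↥(nIdeal G Gs 2))) :
    LinearMap.range f ≤ LinearMap.ker g₂ := by
  refine LinearMap.range_le_ker_iff.2
    (exteriorPower.linearMap_ext (AlternatingMap.ext fun v => ?_))
  obtain ⟨g, hg⟩ := hαsurj (v 0)
  obtain ⟨h, hh⟩ := hαsurj (v 1)
  obtain rfl : v = ![α g, α h] := by ext i; fin_cases i <;> simp [hg, hh]
  have hgh := hGs.commutator_mem_two g h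
  have hsplit : ((β ⟨⁅g, h⁆, hgh⟩, -(α g ⊗ₜ[ℤ] α h - α h ⊗ₜ[ℤ] α g)) : B2 × (A ⊗[ℤ] A)) =
      (β ⟨⁅g, h⁆, hgh⟩, 0) - (0, α g ⊗ₜ[ℤ] α h) + (0, α h ⊗ₜ[ℤ] α g) := by
    ext <;> simp; abel
  show g₂ (f ⟨_, _⟩) = 0
  rw [hf g h hgh, hsplit, map_add, map_sub, hg₂a _ (of_sub_one_mem_nIdeal (by norm_num) hgh),
    hg₂b g h (of_sub_one_mul_mem_nIdeal_two hGs.one_eq_top g h),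
    hg₂b h g (of_sub_one_mul_mem_nIdeal_two hGs.one_eq_top h g),
    ← Submodule.Quotient.mk_sub, ← Submodule.Quotient.mk_add, Submodule.Quotient.mk_eq_zero]
  simpa [sub_add] using of_commutator_sub_one_sub_mem_nIdeal_three hGs.one_eq_top g h

lemma surjective_of_generators (h1 : Gs 1 = ⊤)
    {g₂ : (B2 × (A ⊗[ℤ] A)) →ₗ[ℤ]
      (↥(nIdeal G Gs 2) ⧸ (nIdeal G Gs 3).comap (nIdeal G Gs 2).subtype)}
    (hg₂a : ∀ (a : ↥(Gs 2)) (hm : of ℤ G (a : G) - 1 ∈ nIdeal G Gs 2),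
      g₂ (β a, 0) = Submodule.Quotient.mk (⟨of ℤ G (a : G) - 1, hm⟩ : ↥(nIdeal G Gs 2)))
    (hg₂b : ∀ (x y : G) (hm : (of ℤ G x - 1) * (of ℤ G y - 1) ∈ nIdeal G Gs 2),
      g₂ (0, α x ⊗ₜ[ℤ] α y) = Submodule.Quotient.mk
        (⟨(of ℤ G x - 1) * (of ℤ G y - 1), hm⟩ : ↥(nIdeal G Gs 2))) :
    Function.Surjective g₂ := by
  have key : nIdeal G Gs 2 ≤
      ((LinearMap.range g₂).comap (Submodule.mkQ _)).map (nIdeal G Gs 2).subtype := by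
    refine nIdeal_two_le_sup.trans (sup_le (sup_le (fun z hz => ?_) ?_) ?_)
    · refine ⟨⟨z, nIdeal_antitone (by norm_num) hz⟩, ⟨0, ?_⟩, rfl⟩
      rw [map_zero, eq_comm]
      exact (Submodule.Quotient.mk_eq_zero _).2 hz
    · rw [Submodule.span_le]
      rintro _ ⟨u, rfl⟩
      exact ⟨_, ⟨(β u, 0), hg₂a u (of_sub_one_mem_nIdeal (by norm_num) u.2)⟩, rfl⟩
    · rw [Submodule.span_le]
      rintro _ ⟨⟨x, y⟩, rfl⟩
      exact ⟨_, ⟨(0, α x ⊗ₜ[ℤ] α y), hg₂b x y (of_sub_one_mul_mem_nIdeal_two h1 x y)⟩, rfl⟩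
  intro q
  obtain ⟨x, rfl⟩ := Submodule.Quotient.mk_surjective _ q
  obtain ⟨y, hy, hyx⟩ := key x.2
  exact Subtype.ext hyx ▸ hy

lemma ker_le_range (hGs : IsNSeries Gs) (hα : ∀ g h : G, α (g * h) = α g + α h)
    (hαsurj : Function.Surjective α) (hαker : ∀ g : G, α g = 0 ↔ g ∈ Gs 2)
    (hβadd : ∀ a b : ↥(Gs 2), β (a * b) = β a + β b) (hβsurj : Function.Surjective β)
    (hβker : ∀ a : ↥(Gs 2), β a = 0 ↔ (a : G) ∈ Gs 3)
    {f : ↥(⋀[ℤ]^2 A) →ₗ[ℤ] B2 × (A ⊗[ℤ] A)}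
    (hf : ∀ (g h : G) (hgh : ⁅g, h⁆ ∈ Gs 2)
      (hm : ExteriorAlgebra.ιMulti ℤ 2 ![α g, α h] ∈ ⋀[ℤ]^2 A),
      f ⟨ExteriorAlgebra.ιMulti ℤ 2 ![α g, α h], hm⟩ =
        (β ⟨⁅g, h⁆, hgh⟩, -(α g ⊗ₜ[ℤ] α h - α h ⊗ₜ[ℤ] α g)))
    {g₂ : (B2 × (A ⊗[ℤ] A)) →ₗ[ℤ]
      (↥(nIdeal G Gs 2) ⧸ (nIdeal G Gs 3).comap (nIdeal G Gs 2).subtype)}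
    (hg₂a : ∀ (a : ↥(Gs 2)) (hm : of ℤ G (a : G) - 1 ∈ nIdeal G Gs 2),
      g₂ (β a, 0) = Submodule.Quotient.mk (⟨of ℤ G (a : G) - 1, hm⟩ : ↥(nIdeal G Gs 2)))
    (hg₂b : ∀ (x y : G) (hm : (of ℤ G x - 1) * (of ℤ G y - 1) ∈ nIdeal G Gs 2),
      g₂ (0, α x ⊗ₜ[ℤ] α y) = Submodule.Quotient.mk
        (⟨(of ℤ G x - 1) * (of ℤ G y - 1), hm⟩ : ↥(nIdeal G Gs 2))) :
    LinearMap.ker g₂ ≤ LinearMap.range f := by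
  classical
  let π := (LinearMap.range f).mkQ
  let γ (g : G) : (B2 × (A ⊗[ℤ] A)) ⧸ LinearMap.range f :=
    if hg : g ∈ Gs 2 then π (β ⟨g, hg⟩, 0) else 0
  have hγ2 (u : G) (hu : u ∈ Gs 2) : γ u = π (β ⟨u, hu⟩, 0) := dif_pos hu
  let μ := (TensorProduct.mk ℤ A A).compr₂ (π ∘ₗ LinearMap.inr ℤ B2 (A ⊗[ℤ] A))
  obtain ⟨ψ, hψ1, hψ2⟩ := exists_linearMap_quotient_nIdeal_two hGs hα hαsurj hαker (γ := γ)
    (fun u hu v hv => by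
      rw [hγ2 u hu, hγ2 v hv, hγ2 _ (mul_mem hu hv), ← map_add, Prod.mk_add_mk, add_zero,
        ← hβadd]
      rfl)
    (fun u hu => by
      rw [hγ2 u (hGs.succ_le 2 hu), (hβker _).2 hu, Prod.mk_zero_zero, map_zero])
    μ (fun g h => by
      have hgh := hGs.commutator_mem_two g h
      have hf0 : π (β ⟨⁅g, h⁆, hgh⟩, -(α g ⊗ₜ[ℤ] α h - α h ⊗ₜ[ℤ] α g)) = 0 :=
        (Submodule.Quotient.mk_eq_zero _).2
          ⟨_, hf g h hgh (ExteriorAlgebra.ιMulti_range ℤ 2 ⟨_, rfl⟩)⟩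
      rw [show ((β ⟨⁅g, h⁆, hgh⟩, -(α g ⊗ₜ[ℤ] α h - α h ⊗ₜ[ℤ] α g)) : B2 × (A ⊗[ℤ] A)) =
          (β ⟨⁅g, h⁆, hgh⟩, 0) - ((0, α g ⊗ₜ[ℤ] α h) - (0, α h ⊗ₜ[ℤ] α g)) by ext <;> simp,
        map_sub, map_sub] at hf0
      rw [hγ2 _ hgh]
      exact sub_eq_zero.1 hf0)
  have hψ : ψ ∘ₗ g₂ = π := by
    refine LinearMap.prod_ext (LinearMap.ext fun b => ?_) (TensorProduct.ext' fun a b => ?_)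
    · obtain ⟨u, rfl⟩ := hβsurj b
      show ψ (g₂ (β u, 0)) = π (β u, 0)
      rw [hg₂a u (of_sub_one_mem_nIdeal (by norm_num) u.2), hψ1 _ u.2, hγ2 _ u.2]
    · obtain ⟨x, rfl⟩ := hαsurj a
      obtain ⟨y, rfl⟩ := hαsurj b
      show ψ (g₂ (0, α x ⊗ₜ[ℤ] α y)) = π (0, α x ⊗ₜ[ℤ] α y)
      rw [hg₂b x y (of_sub_one_mul_mem_nIdeal_two hGs.one_eq_top x y), hψ2]
      rfl
  calc LinearMap.ker g₂ ≤ LinearMap.ker (ψ ∘ₗ g₂) := LinearMap.ker_le_ker_comp g₂ ψ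
    _ = LinearMap.range f := by rw [hψ, Submodule.ker_mkQ]

end

/-- for an N-series `𝒢` of `G`, with `A` realizing `G^{AB} = G/G_{(2)}`
(via the surjection `α` with kernel `G_{(2)}`) and `B2` realizing `G_{(2)}/G_{(3)}`
(via `β`), the sequence
`G^{AB} ∧ G^{AB} → (G_{(2)}/G_{(3)}) ⊕ (G^{AB} ⊗ G^{AB}) → Q_2^𝒢(G) → 0`
is exact, where the first map `f` is `(c₂, −l₂)` with `c₂(ā∧b̄) = [a,b]G_{(3)}` and
`l₂(ā∧b̄) = ā⊗b̄ − b̄⊗ā`, and the second map `g₂` sends `(aG_{(3)}, x̄⊗ȳ)` to the class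
of `(a−1) + (x−1)(y−1)` in `Q_2^𝒢(G) = I_𝒢^2(G)/I_𝒢^3(G)`. -/
theorem stmt16 {G A B2 : Type*} [Group G] [AddCommGroup A] [AddCommGroup B2]
    (Gs : ℕ → Subgroup G) (hGs1 : Gs 1 = ⊤) (hdesc : ∀ i, Gs (i + 1) ≤ Gs i)
    (hcomm : ∀ i j, ∀ a ∈ Gs i, ∀ b ∈ Gs j, ⁅a, b⁆ ∈ Gs (i + j))
    (α : G → A) (hαadd : ∀ g h : G, α (g * h) = α g + α h)
    (hαsurj : Function.Surjective α) (hαker : ∀ g : G, α g = 0 ↔ g ∈ Gs 2)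
    (β : ↥(Gs 2) → B2) (hβadd : ∀ a b : ↥(Gs 2), β (a * b) = β a + β b)
    (hβsurj : Function.Surjective β) (hβker : ∀ a : ↥(Gs 2), β a = 0 ↔ (a : G) ∈ Gs 3)
    (f : ↥(⋀[ℤ]^2 A) →ₗ[ℤ] B2 × (A ⊗[ℤ] A))
    (hf : ∀ (g h : G) (hgh : ⁅g, h⁆ ∈ Gs 2)
      (hm : ExteriorAlgebra.ιMulti ℤ 2 ![α g, α h] ∈ ⋀[ℤ]^2 A),
      f ⟨ExteriorAlgebra.ιMulti ℤ 2 ![α g, α h], hm⟩ =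
        (β ⟨⁅g, h⁆, hgh⟩, -(α g ⊗ₜ[ℤ] α h - α h ⊗ₜ[ℤ] α g)))
    (g₂ : (B2 × (A ⊗[ℤ] A)) →ₗ[ℤ]
      (↥(nIdeal G Gs 2) ⧸ (nIdeal G Gs 3).comap (nIdeal G Gs 2).subtype))
    (hg₂a : ∀ (a : ↥(Gs 2)) (hm : MonoidAlgebra.of ℤ G (a : G) - 1 ∈ nIdeal G Gs 2),
      g₂ (β a, 0) = Submodule.Quotient.mk
        (⟨MonoidAlgebra.of ℤ G (a : G) - 1, hm⟩ : ↥(nIdeal G Gs 2)))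
    (hg₂b : ∀ (x y : G)
      (hm : (MonoidAlgebra.of ℤ G x - 1) * (MonoidAlgebra.of ℤ G y - 1) ∈ nIdeal G Gs 2),
      g₂ (0, α x ⊗ₜ[ℤ] α y) = Submodule.Quotient.mk
        (⟨(MonoidAlgebra.of ℤ G x - 1) * (MonoidAlgebra.of ℤ G y - 1), hm⟩ :
          ↥(nIdeal G Gs 2))) :
    Function.Exact f g₂ ∧ Function.Surjective g₂ := by
  have hGs : IsNSeries Gs := ⟨hGs1, hdesc, hcomm⟩
  refine ⟨LinearMap.exact_iff.2 (le_antisymm ?_ ?_), surjective_of_generators hGs1 hg₂a hg₂b⟩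
  · exact ker_le_range hGs hαadd hαsurj hαker hβadd hβsurj hβker hf hg₂a hg₂b
  · exact range_le_ker hGs hαsurj hf hg₂a hg₂b
end
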